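/- arXiv:2505.04130 — 2 statements merged into one kernel-verified Lean document; each statement's English description precedes it below -/
import Mathlib

section
/- Let Γ be a countably infinite group with a fixed enumeration (γ_n)_{n∈ℕ}. For subsets A, B ⊆ Γ define recursively X_n^{A,B} = (A \ ⋃_{m<n} X_m^{A,B}) ∩ ((B \ ⋃_{m<n} X_m^{A,B}·γ_m)·γ_n^{-1}). Then: (i) the sets (X_n^{A,B})_{n∈ℕ} are pairwise disjoint subsets of A, and the sets (X_n^{A,B}·γ_n)_{n∈ℕ} are pairwise disjoint subsets of B; (ii) consequently the map φ^{A,B} sending γ ∈ X_n^{A,B} to γ·γ_n is a well-defined injection from ⋃_n X_n^{A,B} ⊆ A into B; (iii) either the domain of φ^{A,B} equals A or the range of φ^{A,B} equals B; (iv) for every γ ∈ Γ, X_n^{γA, γB} = γ·X_n^{A,B} for all n, and hence φ^{γA,γB}(γx) = γ·φ^{A,B}(x) for all x in the domain of φ^{A,B}. -/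
/-!
Each `X n` takes the points of `A` that are still unmatched and whose right translate by `g n`
lands on a point of `B` that is still unmatched, so both the sets `X n` and their translates
`X n · g n` are carved out of what earlier stages left over, which gives disjointness and
injectivity. If some `a ∈ A` and `b ∈ B` stayed unmatched forever, then at the stage `n` with
`g n = a⁻¹ b` the point `a` would have been matched to `b`. Finally the recursion determines the
sets uniquely, and left translation by `γ` commutes with every operation in it.
-/

open Set Function

theorem pairwise_disjoint_of_disjoint_biUnion {α ι : Type*} [LinearOrder ι] {s : ι → Set α}
    (h : ∀ n, Disjoint (s n) (⋃ m < n, s m)) : Pairwise (Disjoint on s) :=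
  (pairwise_disjoint_on s).2 fun m n hmn =>
    ((h n).mono_right (subset_biUnion_of_mem (u := s) (show m ∈ Iio n from hmn))).symm

theorem exists_forall_eqOn_of_pairwise_disjoint {α β ι : Type*} [Nonempty β] {s : ι → Set α}
    (hs : Pairwise (Disjoint on s)) (f : ι → α → β) : ∃ φ : α → β, ∀ i, EqOn φ (f i) (s i) := by
  classical
  refine ⟨fun x => if h : ∃ i, x ∈ s i then f h.choose x else Classical.arbitrary β,
    fun i x hx => ?_⟩
  have h : ∃ i, x ∈ s i := ⟨i, hx⟩
  have hi : h.choose = i := hs.eq (not_disjoint_iff.2 ⟨x, h.choose_spec, hx⟩)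
  simp only [dif_pos h, hi]

theorem Set.injOn_iUnion_of_pairwise_disjoint_image {α β ι : Type*} {s : ι → Set α} {f : α → β}
    (hinj : ∀ i, InjOn f (s i)) (hdisj : Pairwise (Disjoint on fun i => f '' s i)) :
    InjOn f (⋃ i, s i) := by
  intro x hx y hy hxy
  obtain ⟨i, hxi⟩ := mem_iUnion.1 hx
  obtain ⟨j, hyj⟩ := mem_iUnion.1 hy
  obtain rfl : i = j :=
    hdisj.eq (not_disjoint_iff.2 ⟨f x, mem_image_of_mem f hxi, hxy ▸ mem_image_of_mem f hyj⟩)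
  exact hinj i hxi hyj hxy

section GreedyMatching

variable {Γ : Type*} [Group Γ]

def IsGreedyMatching (g : ℕ → Γ) (A B : Set Γ) (X : ℕ → Set Γ) : Prop :=
  ∀ n, X n = (A \ ⋃ m < n, X m) ∩
    ((· * (g n)⁻¹) '' (B \ ⋃ m < n, (· * g m) '' X m))

namespace IsGreedyMatching

variable {g : ℕ → Γ} {A B : Set Γ} {X : ℕ → Set Γ}

theorem subset_diff (h : IsGreedyMatching g A B X) (n : ℕ) : X n ⊆ A \ ⋃ m < n, X m := by
  rw [h n]
  exact inter_subset_left

theorem image_subset_diff (h : IsGreedyMatching g A B X) (n : ℕ) :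
    (· * g n) '' X n ⊆ B \ ⋃ m < n, (· * g m) '' X m := by
  rw [h n, image_subset_iff]
  rintro _ ⟨-, b, hb, rfl⟩
  simpa using hb

theorem subset_left (h : IsGreedyMatching g A B X) (n : ℕ) : X n ⊆ A :=
  (h.subset_diff n).trans sdiff_subset

theorem image_subset_right (h : IsGreedyMatching g A B X) (n : ℕ) : (· * g n) '' X n ⊆ B :=
  (h.image_subset_diff n).trans sdiff_subset

theorem pairwise_disjoint (h : IsGreedyMatching g A B X) : Pairwise (Disjoint on X) :=
  pairwise_disjoint_of_disjoint_biUnion fun n => disjoint_sdiff_left.mono_left (h.subset_diff n)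

theorem pairwise_disjoint_image (h : IsGreedyMatching g A B X) :
    Pairwise (Disjoint on fun n => (· * g n) '' X n) :=
  pairwise_disjoint_of_disjoint_biUnion fun n =>
    disjoint_sdiff_left.mono_left (h.image_subset_diff n)

theorem iUnion_eq_or_iUnion_image_eq (h : IsGreedyMatching g A B X) (hg : Surjective g) :
    (⋃ n, X n) = A ∨ (⋃ n, (· * g n) '' X n) = B := by
  refine or_iff_not_imp_left.2 fun hA => ?_
  obtain ⟨a, haA, haX⟩ :=
    exists_of_ssubset (ssubset_of_subset_of_ne (iUnion_subset h.subset_left) hA)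
  refine (iUnion_subset h.image_subset_right).antisymm fun b hbB => ?_
  by_contra hbX
  obtain ⟨n, hn⟩ := hg (a⁻¹ * b)
  refine haX (mem_iUnion.2 ⟨n, ?_⟩)
  rw [h n]
  refine ⟨⟨haA, fun ha => haX (iUnion₂_subset_iUnion _ _ ha)⟩,
    b, ⟨hbB, fun hb => hbX (iUnion₂_subset_iUnion _ _ hb)⟩, ?_⟩
  simp [hn]

theorem unique {Y : ℕ → Set Γ} (hX : IsGreedyMatching g A B X) (hY : IsGreedyMatching g A B Y) :
    X = Y := by
  funext n
  induction n using Nat.strong_induction_on with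
  | _ n ih =>
    have hU : ⋃ m < n, X m = ⋃ m < n, Y m := iUnion₂_congr ih
    have hV : ⋃ m < n, (· * g m) '' X m = ⋃ m < n, (· * g m) '' Y m :=
      iUnion₂_congr fun m hm => by rw [ih m hm]
    rw [hX n, hY n, hU, hV]

theorem image_mul_left (h : IsGreedyMatching g A B X) (γ : Γ) :
    IsGreedyMatching g ((γ * ·) '' A) ((γ * ·) '' B) fun n => (γ * ·) '' X n := by
  have hinj : Injective (γ * ·) := mul_right_injective γ
  have hcomm : ∀ (c : Γ) (S : Set Γ), (· * c) '' ((γ * ·) '' S) = (γ * ·) '' ((· * c) '' S) :=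
    fun c S => image_comm fun x => mul_assoc γ x c
  intro n
  simp only [hcomm, ← image_iUnion₂]
  rw [← image_sdiff hinj, ← image_sdiff hinj, hcomm, ← image_inter hinj, ← h n]

end IsGreedyMatching

end GreedyMatching

theorem stmt_4_general {Γ : Type*} [Group Γ]
    (g : ℕ → Γ) (hg : Function.Bijective g)
    (Xn : ℕ → Set Γ → Set Γ → Set Γ)
    (hXn : ∀ (n : ℕ) (A B : Set Γ), Xn n A B =
      (A \ ⋃ m < n, Xn m A B) ∩
        ((fun x => x * (g n)⁻¹) '' (B \ ⋃ m < n, (fun x => x * g m) '' Xn m A B))) :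
    -- (i)
    (∀ A B : Set Γ,
      (∀ m n, m ≠ n → Disjoint (Xn m A B) (Xn n A B)) ∧
      (∀ n, Xn n A B ⊆ A) ∧
      (∀ m n, m ≠ n →
        Disjoint ((fun x => x * g m) '' Xn m A B) ((fun x => x * g n) '' Xn n A B)) ∧
      (∀ n, (fun x => x * g n) '' Xn n A B ⊆ B)) ∧
    -- (ii)
    (∀ A B : Set Γ,
      (∃ φ : Γ → Γ, ∀ n, ∀ x ∈ Xn n A B, φ x = x * g n) ∧
      ∀ φ : Γ → Γ, (∀ n, ∀ x ∈ Xn n A B, φ x = x * g n) →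
        Set.InjOn φ (⋃ n, Xn n A B) ∧ (⋃ n, Xn n A B) ⊆ A ∧
          φ '' (⋃ n, Xn n A B) ⊆ B) ∧
    -- (iii)
    (∀ A B : Set Γ,
      (⋃ n, Xn n A B) = A ∨ (⋃ n, (fun x => x * g n) '' Xn n A B) = B) ∧
    -- (iv)
    (∀ (A B : Set Γ) (γ : Γ) (n : ℕ),
      Xn n ((fun x => γ * x) '' A) ((fun x => γ * x) '' B)
        = (fun x => γ * x) '' Xn n A B) ∧
    (∀ (A B : Set Γ) (γ : Γ) (φ φ' : Γ → Γ),
      (∀ n, ∀ x ∈ Xn n A B, φ x = x * g n) →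
      (∀ n, ∀ x ∈ Xn n ((fun x => γ * x) '' A) ((fun x => γ * x) '' B),
        φ' x = x * g n) →
      ∀ x ∈ ⋃ n, Xn n A B, φ' (γ * x) = γ * φ x) := by
  have hX (A B : Set Γ) : IsGreedyMatching g A B fun n => Xn n A B := fun n => hXn n A B
  have htrans (A B : Set Γ) (γ : Γ) (n : ℕ) :
      Xn n ((γ * ·) '' A) ((γ * ·) '' B) = (γ * ·) '' Xn n A B :=
    congrFun ((hX _ _).unique ((hX A B).image_mul_left γ)) n
  refine ⟨fun A B => ⟨fun _ _ hmn => (hX A B).pairwise_disjoint hmn, (hX A B).subset_left,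
      fun _ _ hmn => (hX A B).pairwise_disjoint_image hmn, (hX A B).image_subset_right⟩,
    fun A B => ⟨exists_forall_eqOn_of_pairwise_disjoint (hX A B).pairwise_disjoint _,
      fun φ hφ => ⟨?_, iUnion_subset (hX A B).subset_left, ?_⟩⟩,
    fun A B => (hX A B).iUnion_eq_or_iUnion_image_eq hg.2, htrans, ?_⟩
  · refine injOn_iUnion_of_pairwise_disjoint_image (fun n => ?_) ?_
    · exact ((mul_left_injective (g n)).injOn).congr fun x hx => (hφ n x hx).symm
    · simpa only [image_congr (hφ _)] using (hX A B).pairwise_disjoint_image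
  · rw [image_iUnion]
    exact iUnion_subset fun n => (image_congr (hφ n)).trans_subset ((hX A B).image_subset_right n)
  · intro A B γ φ φ' hφ hφ' x hx
    obtain ⟨n, hn⟩ := mem_iUnion.1 hx
    rw [hφ' n _ (htrans A B γ n ▸ mem_image_of_mem _ hn), hφ n x hn, mul_assoc]

/-- Basic combinatorial properties of the sets `X_n^{A,B}` and the map
`φ^{A,B}`: (i) disjointness, (ii) `φ` is a well-defined injection from a subset of `A`
into `B`, (iii) the domain is all of `A` or the range is all of `B`,
(iv) equivariance under left translation. -/
theorem stmt_4 {Γ : Type*} [Group Γ] [Countable Γ] [Infinite Γ]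
    (g : ℕ → Γ) (hg : Function.Bijective g)
    (Xn : ℕ → Set Γ → Set Γ → Set Γ)
    (hXn : ∀ (n : ℕ) (A B : Set Γ), Xn n A B =
      (A \ ⋃ m < n, Xn m A B) ∩
        ((fun x => x * (g n)⁻¹) '' (B \ ⋃ m < n, (fun x => x * g m) '' Xn m A B))) :
    -- (i)
    (∀ A B : Set Γ,
      (∀ m n, m ≠ n → Disjoint (Xn m A B) (Xn n A B)) ∧
      (∀ n, Xn n A B ⊆ A) ∧
      (∀ m n, m ≠ n →
        Disjoint ((fun x => x * g m) '' Xn m A B) ((fun x => x * g n) '' Xn n A B)) ∧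
      (∀ n, (fun x => x * g n) '' Xn n A B ⊆ B)) ∧
    -- (ii)
    (∀ A B : Set Γ,
      (∃ φ : Γ → Γ, ∀ n, ∀ x ∈ Xn n A B, φ x = x * g n) ∧
      ∀ φ : Γ → Γ, (∀ n, ∀ x ∈ Xn n A B, φ x = x * g n) →
        Set.InjOn φ (⋃ n, Xn n A B) ∧ (⋃ n, Xn n A B) ⊆ A ∧
          φ '' (⋃ n, Xn n A B) ⊆ B) ∧
    -- (iii)
    (∀ A B : Set Γ,
      (⋃ n, Xn n A B) = A ∨ (⋃ n, (fun x => x * g n) '' Xn n A B) = B) ∧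
    -- (iv)
    (∀ (A B : Set Γ) (γ : Γ) (n : ℕ),
      Xn n ((fun x => γ * x) '' A) ((fun x => γ * x) '' B)
        = (fun x => γ * x) '' Xn n A B) ∧
    (∀ (A B : Set Γ) (γ : Γ) (φ φ' : Γ → Γ),
      (∀ n, ∀ x ∈ Xn n A B, φ x = x * g n) →
      (∀ n, ∀ x ∈ Xn n ((fun x => γ * x) '' A) ((fun x => γ * x) '' B),
        φ' x = x * g n) →
      ∀ x ∈ ⋃ n, Xn n A B, φ' (γ * x) = γ * φ x) :=
  stmt_4_general g hg Xn hXn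
end

section
/- Fix d ≥ 2 and a countably infinite group Γ. Let K(Γ) ⊆ 2^(Γ×Γ) be the set of symmetric irreflexive relations G on Γ that are connected graphs with vertex set Γ of maximum degree ≤ d, equipped with the logic action of Γ. Call G ∈ K(Γ) bad if there exist γ, δ ∈ Γ with δ G (γδ) and γ·G = G, and good otherwise; let X ⊆ K(Γ) be the set of good graphs. Then: (i) X is a Γ-invariant dense G_δ subset of K(Γ) (in the subspace topology) containing the free part {G ∈ K(Γ) : γ·G ≠ G for all γ ≠ 1_Γ}; (ii) there is a Borel Γ-equivariant map c : X → (d+1)^Γ (where Γ acts on (d+1)^Γ by (γ·y)(δ) = y(γ⁻¹δ)) such that for every G ∈ X, c(G) is a proper vertex colouring of G, i.e. c(G)(x) ≠ c(G)(y) whenever x G y; (iii) for every bad G ∈ K(Γ), there is no Γ-equivariant map from the orbit Γ·G to (d+1)^Γ assigning to each graph in the orbit a proper vertex colouring. -/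
/-- The logic action of `Γ` on binary relations on `Γ` (coded as points of `2^(Γ×Γ)`):
`(γ·R)(x,y) ⇔ R(γ⁻¹x, γ⁻¹y)`. -/
def logicAct {Γ : Type*} [Group Γ] (γ : Γ) (R : Γ × Γ → Bool) : Γ × Γ → Bool :=
  fun q => R (γ⁻¹ * q.1, γ⁻¹ * q.2)

/-- `G` codes a connected graph on `Γ` of maximum degree `≤ d`: a symmetric irreflexive
relation, connected by finite paths, with every vertex having at most `d` neighbours. -/
def IsConnGraphDeg {Γ : Type*} (d : ℕ) (G : Γ × Γ → Bool) : Prop :=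
  (∀ x y, G (x, y) = G (y, x)) ∧
  (∀ x, G (x, x) = false) ∧
  (∀ x y : Γ, Relation.ReflTransGen (fun a b => G (a, b) = true) x y) ∧
  (∀ x : Γ, {y : Γ | G (x, y) = true}.encard ≤ (d : ℕ∞))

/-- `G` is bad: some `γ` fixes `G` and moves an edge along itself. -/
def IsBadGraph {Γ : Type*} [Group Γ] (G : Γ × Γ → Bool) : Prop :=
  ∃ γ δ : Γ, G (δ, γ * δ) = true ∧ logicAct γ G = G

namespace Stmt11
open Relation Set

variable {Γ : Type*} [Group Γ]

lemma logicAct_apply (γ : Γ) (R : Γ × Γ → Bool) (x y : Γ) :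
    logicAct γ R (x, y) = R (γ⁻¹ * x, γ⁻¹ * y) := rfl

lemma logicAct_logicAct (γ δ : Γ) (R : Γ × Γ → Bool) :
    logicAct γ (logicAct δ R) = logicAct (γ * δ) R := by
  funext q
  simp [logicAct, mul_assoc, mul_inv_rev]

lemma logicAct_one (R : Γ × Γ → Bool) : logicAct (1 : Γ) R = R := by
  funext q; simp [logicAct]

lemma isConnGraphDeg_logicAct {d : ℕ} {G : Γ × Γ → Bool} (h : IsConnGraphDeg d G) (γ : Γ) :
    IsConnGraphDeg d (logicAct γ G) := by
  obtain ⟨hsym, hirr, hconn, hdeg⟩ := h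
  refine ⟨fun x y => hsym _ _, fun x => hirr _, fun x y => ?_, fun x => ?_⟩
  · have key : ∀ a b : Γ, G (a, b) = true → logicAct γ G (γ * a, γ * b) = true := by
      intro a b hab
      rw [logicAct_apply]
      simpa using hab
    have := Relation.ReflTransGen.lift (r := fun a b => G (a, b) = true)
      (p := fun a b => logicAct γ G (a, b) = true) (fun a => γ * a)
      (fun a b hab => key a b hab) _ _ (hconn (γ⁻¹ * x) (γ⁻¹ * y))
    simpa [Function.onFun] using this
  · have : {y : Γ | logicAct γ G (x, y) = true} = (fun z => γ * z) '' {y : Γ | G (γ⁻¹ * x, y) = true} := by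
      ext y
      simp only [mem_setOf_eq, logicAct_apply, Set.mem_image]
      constructor
      · intro hy; exact ⟨γ⁻¹ * y, hy, by simp⟩
      · rintro ⟨z, hz, rfl⟩; simpa using hz
    rw [this, (mul_right_injective γ).encard_image _]
    exact hdeg _

lemma isBadGraph_logicAct {G : Γ × Γ → Bool} {γ : Γ} (h : IsBadGraph (logicAct γ G)) :
    IsBadGraph G := by
  obtain ⟨γ', δ', hedge, hfix⟩ := h
  refine ⟨γ⁻¹ * γ' * γ, γ⁻¹ * δ', ?_, ?_⟩
  · have : logicAct γ G (δ', γ' * δ') = true := hedge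
    rw [logicAct_apply] at this
    convert this using 2
    group
  · have : logicAct (γ⁻¹) (logicAct γ' (logicAct γ G)) = logicAct γ⁻¹ (logicAct γ G) := by
      rw [hfix]
    rw [logicAct_logicAct, logicAct_logicAct, logicAct_logicAct, inv_mul_cancel, logicAct_one] at this
    convert this using 2

lemma not_isBadGraph_of_pivot {G' : Γ × Γ → Bool} (hirr : ∀ x, G' (x, x) = false)
    (p q₀ : Γ) (hp : ∀ y, G' (p, y) = true → y = q₀)
    (hoth : ∀ x, x ≠ p → ∃ y z, y ≠ z ∧ G' (x, y) = true ∧ G' (x, z) = true) :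
    ¬ IsBadGraph G' := by
  rintro ⟨γ, δ, hedge, hfix⟩
  have hγ : γ = 1 := by
    by_contra hne
    have hxp : γ * p ≠ p := by
      intro h
      exact hne (by simpa using mul_right_cancel (b := p) (h.trans (one_mul p).symm))
    obtain ⟨y, z, hyz, hy, hz⟩ := hoth (γ * p) hxp
    have hy' : G' (p, γ⁻¹ * y) = true := by
      have := congrFun hfix (γ * p, y)
      rw [logicAct_apply] at this
      rw [← this] at hy
      simpa using hy
    have hz' : G' (p, γ⁻¹ * z) = true := by
      have := congrFun hfix (γ * p, z)
      rw [logicAct_apply] at this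
      rw [← this] at hz
      simpa using hz
    exact hyz (mul_left_cancel (a := γ⁻¹) ((hp _ hy').trans (hp _ hz').symm))
  subst hγ
  rw [one_mul] at hedge
  rw [hirr δ] at hedge
  exact Bool.false_ne_true hedge

end Stmt11

section Sec2
open Relation Set
variable {Γ : Type*} [Group Γ]

lemma Stmt11.continuous_logicAct (γ : Γ) : Continuous (logicAct γ : (Γ × Γ → Bool) → (Γ × Γ → Bool)) := by
  refine continuous_pi fun q => ?_
  exact continuous_apply _

lemma Stmt11.good_isGδ [Countable Γ] (d : ℕ) :
    IsGδ {G : {H : Γ × Γ → Bool // IsConnGraphDeg d H} | ¬ IsBadGraph (G : Γ × Γ → Bool)} := by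
  have hset : {G : {H : Γ × Γ → Bool // IsConnGraphDeg d H} | ¬ IsBadGraph (G : Γ × Γ → Bool)} =
      ⋂ (p : Γ × Γ), {G : {H : Γ × Γ → Bool // IsConnGraphDeg d H} |
        ¬ ((G : Γ × Γ → Bool) (p.2, p.1 * p.2) = true ∧ logicAct p.1 (G : Γ × Γ → Bool) = (G : Γ × Γ → Bool))} := by
    ext G
    simp only [Set.mem_iInter, Set.mem_setOf_eq]
    constructor
    · intro h p hp
      exact h ⟨p.1, p.2, hp.1, hp.2⟩
    · rintro h ⟨γ, δ, h1, h2⟩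
      exact h (γ, δ) ⟨h1, h2⟩
  rw [hset]
  refine IsGδ.iInter fun p => IsOpen.isGδ ?_
  have : IsClosed {H : Γ × Γ → Bool |
      H (p.2, p.1 * p.2) = true ∧ logicAct p.1 H = H} := by
    refine IsClosed.inter ?_ ?_
    · show IsClosed ((fun H : Γ × Γ → Bool => H (p.2, p.1 * p.2)) ⁻¹' {true})
      exact (isClosed_discrete _).preimage (continuous_apply _)
    · exact isClosed_eq (Stmt11.continuous_logicAct p.1) continuous_id
  have : IsOpen {H : Γ × Γ → Bool | ¬ (H (p.2, p.1 * p.2) = true ∧ logicAct p.1 H = H)} :=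
    this.isOpen_compl
  exact this.preimage continuous_subtype_val

lemma Stmt11.free_good {d : ℕ} {G : Γ × Γ → Bool} (hG : IsConnGraphDeg d G)
    (hfree : ∀ γ : Γ, γ ≠ 1 → logicAct γ G ≠ G) : ¬ IsBadGraph G := by
  rintro ⟨γ, δ, hedge, hfix⟩
  rcases eq_or_ne γ 1 with rfl | hne
  · rw [one_mul, hG.2.1 δ] at hedge
    exact Bool.false_ne_true hedge
  · exact hfree γ hne hfix

lemma Stmt11.part_iii {d : ℕ} (G : Γ × Γ → Bool) (hG : IsConnGraphDeg d G) (hbad : IsBadGraph G) :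
    ¬ ∃ c : (Γ × Γ → Bool) → (Γ → Fin (d + 1)),
      (∀ γ δ : Γ, c (logicAct γ (logicAct δ G)) = fun x => c (logicAct δ G) (γ⁻¹ * x)) ∧
      (∀ δ : Γ, ∀ x y : Γ, (logicAct δ G) (x, y) = true →
        c (logicAct δ G) x ≠ c (logicAct δ G) y) := by
  rintro ⟨c, hequiv, hproper⟩
  obtain ⟨γ, δ, hedge, hfix⟩ := hbad
  have h1 : (logicAct (1 : Γ) G) = G := Stmt11.logicAct_one G
  have hcG : c G = fun x => c G (γ⁻¹ * x) := by
    have := hequiv γ 1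
    rw [h1, hfix] at this
    exact this
  have hne := hproper 1 δ (γ * δ) (by rw [h1]; exact hedge)
  rw [h1] at hne
  apply hne
  have : c G (γ * δ) = c G (γ⁻¹ * (γ * δ)) := congrFun hcG (γ * δ)
  rw [this, inv_mul_cancel_left]
end Sec2

namespace Stmt11
section Sec3
open Relation Set
variable {Γ : Type*} [Group Γ]

open scoped Classical in
noncomputable def ofRel (R : Γ → Γ → Prop) : Γ × Γ → Bool :=
  fun q => if R q.1 q.2 then true else false

lemma ofRel_eq_true {R : Γ → Γ → Prop} {x y : Γ} : ofRel R (x, y) = true ↔ R x y := by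
  classical
  simp [ofRel]

lemma rtg_symm {α : Type*} {rel : α → α → Prop} (hs : ∀ a b, rel a b → rel b a) {x y : α}
    (h : ReflTransGen rel x y) : ReflTransGen rel y x := by
  induction h with
  | refl => exact ReflTransGen.refl
  | tail _ h2 ih => exact ReflTransGen.head (hs _ _ h2) ih

lemma conn_of_hub {α : Type*} {rel : α → α → Prop} (hs : ∀ a b, rel a b → rel b a)
    (hub : α) (hhub : ∀ x, ReflTransGen rel hub x) (x y : α) : ReflTransGen rel x y :=
  (rtg_symm hs (hhub x)).trans (hhub y)

def rayRel (r : ℕ → Γ) (x y : Γ) : Prop :=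
  ∃ n, (x = r n ∧ y = r (n + 1)) ∨ (y = r n ∧ x = r (n + 1))

lemma rayRel_symm (r : ℕ → Γ) (x y : Γ) (h : rayRel r x y) : rayRel r y x := by
  obtain ⟨n, h | h⟩ := h
  · exact ⟨n, Or.inr h⟩
  · exact ⟨n, Or.inl h⟩

lemma rayRel_nbr {r : ℕ → Γ} (hinj : Function.Injective r) (n : ℕ) {y : Γ}
    (h : rayRel r (r n) y) : y = r (n + 1) ∨ ∃ m, n = m + 1 ∧ y = r m := by
  obtain ⟨k, ⟨h1, h2⟩ | ⟨h1, h2⟩⟩ := h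
  · left; rw [h2, hinj h1]
  · right; exact ⟨k, (hinj h2.symm ▸ rfl : n = k + 1), h1⟩

lemma rayRel_irrefl {r : ℕ → Γ} (hinj : Function.Injective r) (x : Γ) : ¬ rayRel r x x := by
  rintro ⟨n, ⟨h1, h2⟩ | ⟨h1, h2⟩⟩ <;>
  · rw [h1] at h2
    have := hinj h2
    omega

lemma rayRel_conn {r : ℕ → Γ} (hsurj : Function.Surjective r) (x y : Γ) :
    ReflTransGen (rayRel r) x y := by
  have hhub : ∀ z : Γ, ReflTransGen (rayRel r) (r 0) z := by
    intro z
    obtain ⟨n, rfl⟩ := hsurj z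
    induction n with
    | zero => exact ReflTransGen.refl
    | succ k ih => exact ih.tail ⟨k, Or.inl ⟨rfl, rfl⟩⟩
  exact conn_of_hub (rayRel_symm r) (r 0) hhub x y

lemma rayRel_encard {r : ℕ → Γ} (hinj : Function.Injective r) (x : Γ) :
    {y : Γ | rayRel r x y}.encard ≤ 2 := by
  rcases em (∃ n, x = r n) with ⟨n, rfl⟩ | hx
  · have hsub : {y : Γ | rayRel r (r n) y} ⊆ {r (n + 1), r (n - 1)} := by
      intro y hy
      rcases rayRel_nbr hinj n hy with h | ⟨m, hm, h⟩
      · exact Or.inl h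
      · right; rw [h, hm]; norm_num
    calc {y : Γ | rayRel r (r n) y}.encard ≤ ({r (n + 1), r (n - 1)} : Set Γ).encard :=
          encard_mono hsub
      _ ≤ 2 := by
          apply (encard_insert_le _ _).trans
          rw [encard_singleton]
          norm_num
  · have : {y : Γ | rayRel r x y} = ∅ := by
      ext y
      simp only [mem_setOf_eq, mem_empty_iff_false, iff_false]
      rintro ⟨n, ⟨h1, _⟩ | ⟨_, h1⟩⟩
      · exact hx ⟨n, h1⟩
      · exact hx ⟨n + 1, h1⟩
    rw [this, encard_empty]
    norm_num

/-- A graph given by a symmetric irreflexive relation, where vertex `p` has only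
neighbour `q₀` and every other vertex has two distinct neighbours, is good. -/
lemma not_isBadGraph_ofRel {R : Γ → Γ → Prop} (hirr : ∀ x, ¬ R x x) {p q₀ : Γ}
    (hp : ∀ y, R p y → y = q₀)
    (hoth : ∀ x, x ≠ p → ∃ y z, y ≠ z ∧ R x y ∧ R x z) :
    ¬ IsBadGraph (ofRel R) := by
  refine not_isBadGraph_of_pivot (fun x => ?_) p q₀ (fun y hy => hp y (ofRel_eq_true.1 hy))
    (fun x hx => ?_)
  · simp only [ofRel]
    split
    · exact absurd (by assumption) (hirr x)
    · rfl
  · obtain ⟨y, z, hyz, hy, hz⟩ := hoth x hx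
    exact ⟨y, z, hyz, ofRel_eq_true.2 hy, ofRel_eq_true.2 hz⟩

end Sec3
end Stmt11

namespace Stmt11
variable {Γ' : Type*} [Group Γ']
lemma ofRel_eq_false {R : Γ' → Γ' → Prop} {x y : Γ'} : ofRel R (x, y) = false ↔ ¬ R x y := by
  classical
  simp [ofRel]

lemma ofRel_symm {R : Γ' → Γ' → Prop} (hRsym : ∀ x y, R x y → R y x) (x y : Γ') :
    ofRel R (x, y) = ofRel R (y, x) := by
  classical
  rcases h : ofRel R (x, y) with _ | _
  · rcases h2 : ofRel R (y, x) with _ | _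
    · rfl
    · exact absurd (hRsym _ _ (ofRel_eq_true.1 h2)) (ofRel_eq_false.1 h)
  · exact (ofRel_eq_true.2 (hRsym _ _ (ofRel_eq_true.1 h))).symm
end Stmt11

namespace Stmt11
section PathList
open Relation Set

variable {Γ : Type*} [DecidableEq Γ]

/-- adjacency in a list -/
def AdjL (l : List Γ) (x y : Γ) : Prop :=
  ∃ i : ℕ, (l[i]? = some x ∧ l[i+1]? = some y) ∨ (l[i]? = some y ∧ l[i+1]? = some x)

lemma adjL_symm {l : List Γ} {x y : Γ} (h : AdjL l x y) : AdjL l y x := by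
  obtain ⟨i, h | h⟩ := h
  · exact ⟨i, Or.inr h⟩
  · exact ⟨i, Or.inl h⟩

/-- surgery: remove a degree-one vertex, keeping reachability -/
lemma rtg_avoid {B : Γ → Γ → Prop} {v a : Γ}
    (hnbr : {y | B v y} = {a}) (hsymB : ∀ x y, B x y → B y x) :
    ∀ x y, ReflTransGen B x y → x ≠ v →
      ((y = v ∧ ReflTransGen (fun s t => B s t ∧ s ≠ v ∧ t ≠ v) x a) ∨
       (y ≠ v ∧ ReflTransGen (fun s t => B s t ∧ s ≠ v ∧ t ≠ v) x y)) := by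
  intro x y h hx
  induction h with
  | refl => exact Or.inr ⟨hx, ReflTransGen.refl⟩
  | @tail b c hab hbc ih =>
    by_cases hc : c = v
    · rcases ih with ⟨_, hpath⟩ | ⟨hbne, hpath⟩
      · exact Or.inl ⟨hc, hpath⟩
      · have hb' : b = a := by
          have hvb : B v b := by
            rw [hc] at hbc
            exact hsymB _ _ hbc
          have : b ∈ {y | B v y} := hvb
          rwa [hnbr, mem_singleton_iff] at this
        rw [hb'] at hpath
        exact Or.inl ⟨hc, hpath⟩
    · rcases ih with ⟨hbv, hpath⟩ | ⟨hbne, hpath⟩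
      · have hc' : c = a := by
          have : c ∈ {y | B v y} := by
            rw [hbv] at hbc
            exact hbc
          rwa [hnbr, mem_singleton_iff] at this
        rw [← hc'] at hpath
        exact Or.inr ⟨hc, hpath⟩
      · exact Or.inr ⟨hc, hpath.tail ⟨hbc, hbne, hc⟩⟩

lemma getElem?_append_some {l t : List Γ} {i : ℕ} {x : Γ} (h : l[i]? = some x) :
    (l ++ t)[i]? = some x := by
  obtain ⟨hlt, _⟩ := List.getElem?_eq_some_iff.1 h
  rw [List.getElem?_append, if_pos hlt]
  exact h

lemma pathlist : ∀ (n : ℕ) (V : Finset Γ) (B : Γ → Γ → Prop) (v : Γ),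
    V.card = n →
    (∀ x y, B x y → B y x) → (∀ x, ¬ B x x) → (∀ x y, B x y → x ∈ V ∧ y ∈ V) →
    (∀ x, {y | B x y}.encard ≤ 2) →
    (∀ u ∈ V, ReflTransGen B v u) → v ∈ V →
    {y | B v y}.encard ≤ 1 →
    ∃ l : List Γ, l.Nodup ∧ l.toFinset = V ∧ List.Chain' B l ∧ l.getLast? = some v ∧
      (∀ x y, B x y → AdjL l x y) := by
  intro n
  induction n using Nat.strong_induction_on with
  | _ n ih =>
    intro V B v hcard hsymB hirrB hmemB hdegB hconnB hvV hvdeg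
    classical
    by_cases h0 : {y | B v y} = ∅
    · have hV : V = {v} := by
        apply Finset.ext
        intro u
        simp only [Finset.mem_singleton]
        constructor
        · intro hu
          rcases (hconnB u hu).cases_head with heq | ⟨c, hvc, _⟩
          · exact heq.symm
          · exact absurd (show c ∈ {y | B v y} from hvc) (by rw [h0]; exact notMem_empty c)
        · rintro rfl; exact hvV
      refine ⟨[v], by simp, by simp [hV], List.isChain_singleton v, by simp, fun x y hxy => ?_⟩
      have hx := (hmemB x y hxy).1
      rw [hV, Finset.mem_singleton] at hx
      subst hx
      exact absurd (show y ∈ {y | B x y} from hxy) (by rw [h0]; exact notMem_empty y)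
    · -- v has exactly one neighbour a
      obtain ⟨a, ha⟩ : ∃ a, {y | B v y} = {a} := by
        rcases Set.encard_le_one_iff_eq.1 hvdeg with h | h
        · exact absurd h h0
        · exact h
      have hBva : B v a := by
        have : a ∈ {y | B v y} := by rw [ha]; exact rfl
        exact this
      have hav : a ≠ v := by rintro rfl; exact hirrB a hBva
      have haV : a ∈ V := (hmemB v a hBva).2
      set B' : Γ → Γ → Prop := fun s t => B s t ∧ s ≠ v ∧ t ≠ v with hB'
      set V' : Finset Γ := V.erase v with hV'
      have haV' : a ∈ V' := Finset.mem_erase.2 ⟨hav, haV⟩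
      have hcard' : V'.card < n := by
        rw [← hcard, hV']
        exact Finset.card_erase_lt_of_mem hvV
      have hsymB' : ∀ x y, B' x y → B' y x := fun x y h => ⟨hsymB _ _ h.1, h.2.2, h.2.1⟩
      have hirrB' : ∀ x, ¬ B' x x := fun x h => hirrB x h.1
      have hmemB' : ∀ x y, B' x y → x ∈ V' ∧ y ∈ V' := fun x y h =>
        ⟨Finset.mem_erase.2 ⟨h.2.1, (hmemB _ _ h.1).1⟩,
         Finset.mem_erase.2 ⟨h.2.2, (hmemB _ _ h.1).2⟩⟩
      have hdegB' : ∀ x, {y | B' x y}.encard ≤ 2 := fun x =>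
        le_trans (encard_mono (fun y hy => hy.1)) (hdegB x)
      have hconnB' : ∀ u ∈ V', ReflTransGen B' a u := by
        intro u hu
        obtain ⟨huv, huV⟩ := Finset.mem_erase.1 hu
        rcases (hconnB u huV).cases_head with heq | ⟨c, hvc, hcu⟩
        · exact absurd heq.symm huv
        · have hc : c = a := by
            have : c ∈ {y | B v y} := hvc
            rwa [ha, mem_singleton_iff] at this
          rw [hc] at hcu
          rcases rtg_avoid ha hsymB a u hcu hav with ⟨hq, _⟩ | ⟨_, hp⟩
          · exact absurd hq huv
          · exact hp
      have hadeg : {y | B' a y}.encard ≤ 1 := by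
        have hsub : {y | B' a y} ⊆ {y | B a y} \ {v} := by
          intro y hy
          exact ⟨hy.1, by simpa using hy.2.2⟩
        have hvmem : v ∈ {y | B a y} := hsymB _ _ hBva
        have hdiff : ({y | B a y} \ {v}).encard + 1 = {y | B a y}.encard :=
          Set.encard_diff_singleton_add_one hvmem
        have h2 := hdegB a
        rw [← hdiff] at h2
        have : ({y | B a y} \ {v}).encard + 1 ≤ 1 + 1 := by
          rwa [show ((2:ℕ∞)) = 1 + 1 from rfl] at h2
        have := WithTop.add_le_add_iff_right (by simp : (1:ℕ∞) ≠ ⊤) |>.1 this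
        exact le_trans (encard_mono hsub) this
      obtain ⟨l', hnd', htf', hch', hlast', hadj'⟩ :=
        ih V'.card hcard' V' B' a rfl hsymB' hirrB' hmemB' hdegB' hconnB' haV' hadeg
      have hvl' : v ∉ l' := by
        intro hv
        have : v ∈ V' := by rw [← htf']; exact List.mem_toFinset.2 hv
        exact (Finset.mem_erase.1 this).1 (rfl)
      have hl'ne : l' ≠ [] := by
        intro h
        rw [h] at hlast'
        simp at hlast'
      refine ⟨l' ++ [v], ?_, ?_, ?_, ?_, ?_⟩
      · rw [List.nodup_append]
        exact ⟨hnd', List.nodup_singleton v, by simpa using fun a (ha : a ∈ l') (h : a = v) => hvl' (h ▸ ha)⟩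
      · rw [List.toFinset_append, htf']
        simp only [List.toFinset_cons, List.toFinset_nil, LawfulSingleton.insert_empty_eq]
        ext u
        simp only [Finset.mem_union, Finset.mem_erase, Finset.mem_singleton, hV']
        constructor
        · rintro (⟨_, hu⟩ | rfl)
          · exact hu
          · exact hvV
        · intro hu
          by_cases huv : u = v
          · exact Or.inr huv
          · exact Or.inl ⟨huv, hu⟩
      · rw [show List.Chain' B (l' ++ [v]) ↔ _ from List.isChain_append]
        refine ⟨List.IsChain.imp (fun s t h => h.1) hch', List.isChain_singleton v, ?_⟩
        intro x hx y hy
        simp only [List.head?_cons, Option.mem_def, Option.some.injEq] at hy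
        subst hy
        rw [hlast'] at hx
        simp only [Option.mem_def, Option.some.injEq] at hx
        subst hx
        exact hsymB _ _ hBva
      · exact List.getLast?_concat
      · intro x y hxy
        have hpos : 0 < l'.length := List.length_pos_iff.2 hl'ne
        have hgeta : l'[l'.length - 1]? = some a := by
          have := hlast'
          rwa [List.getLast?_eq_getElem?] at this
        have heq : l'.length - 1 + 1 = l'.length := by omega
        by_cases hxv : x = v
        · have hy : y = a := by
            have : y ∈ {z | B v z} := by rw [← hxv]; exact hxy
            rwa [ha, mem_singleton_iff] at this
          refine ⟨l'.length - 1, Or.inr ⟨?_, ?_⟩⟩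
          · rw [hy]
            exact getElem?_append_some hgeta
          · rw [heq, hxv]
            exact List.getElem?_concat_length
        · by_cases hyv : y = v
          · have hx : x = a := by
              have : x ∈ {z | B v z} := by
                rw [← hyv]
                exact hsymB _ _ hxy
              rwa [ha, mem_singleton_iff] at this
            refine ⟨l'.length - 1, Or.inl ⟨?_, ?_⟩⟩
            · rw [hx]
              exact getElem?_append_some hgeta
            · rw [heq, hyv]
              exact List.getElem?_concat_length
          · obtain ⟨i, hi⟩ := hadj' x y ⟨hxy, hxv, hyv⟩
            refine ⟨i, ?_⟩
            rcases hi with ⟨h1, h2⟩ | ⟨h1, h2⟩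
            · exact Or.inl ⟨getElem?_append_some h1, getElem?_append_some h2⟩
            · exact Or.inr ⟨getElem?_append_some h1, getElem?_append_some h2⟩
end PathList
end Stmt11

namespace Stmt11
section Spine
open Relation Set
variable {Γ : Type*} [Group Γ]

lemma spine_lemma (d : ℕ) (hd : 3 ≤ d) (T' : Finset Γ) (B : Γ → Γ → Prop)
    (w : ℕ → Γ) (v : Γ)
    (hBsym : ∀ x y, B x y → B y x) (hBirr : ∀ x, ¬ B x x)
    (hBmem : ∀ x y, B x y → x ∈ T' ∧ y ∈ T')
    (hBdeg : ∀ x, {y | B x y}.encard ≤ (d : ℕ∞))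
    (hvT : v ∈ T')
    (hconn : ∀ u ∈ T', Relation.ReflTransGen B v u)
    (hvdeg : {y | B v y}.encard + 1 ≤ (d : ℕ∞))
    (hwinj : Function.Injective w) (hwnot : ∀ n, w n ∉ T')
    (hwsurj : ∀ z, z ∉ T' → ∃ n, w n = z) :
    ∃ G' : Γ × Γ → Bool, IsConnGraphDeg d G' ∧ ¬ IsBadGraph G' ∧
      (∀ x y, B x y → G' (x, y) = true) ∧
      (∀ x y, x ∈ T' → y ∈ T' → ¬ B x y → G' (x, y) = false) := by
  classical
  set bd : Γ → ℕ := fun x => ({y | B x y}).ncard with hbd_def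
  have hfinB : ∀ x, ({y | B x y}).Finite := fun x =>
    Set.Finite.subset T'.finite_toSet (fun y hy => (hBmem x y hy).2)
  have hcast : ∀ x, ({y | B x y}).encard = (bd x : ℕ∞) := by
    intro x
    rw [hbd_def]
    simp only [Set.ncard_def]
    rw [ENat.coe_toNat (by exact (Set.encard_lt_top_iff.2 (hfinB x)).ne)]
  have hbdle : ∀ x, bd x ≤ d := by
    intro x
    have := hBdeg x
    rw [hcast x] at this
    exact_mod_cast this
  have hbdv : bd v + 1 ≤ d := by
    have := hvdeg
    rw [hcast v] at this
    have h2 : ((bd v + 1 : ℕ) : ℕ∞) ≤ (d : ℕ∞) := by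
      push_cast
      exact this
    exact_mod_cast h2
  set m : Γ → ℕ := fun u => if u = v then max 1 (2 - bd u) else 2 - bd u with hm_def
  have hm1v : 1 ≤ m v := by simp [hm_def]
  have hmle : ∀ u, m u ≤ 2 := by
    intro u
    simp only [hm_def]
    split <;> omega
  have hsum_le : ∀ u ∈ T', bd u + m u ≤ d := by
    intro u _
    simp only [hm_def]
    split
    · rename_i hu
      rw [hu]
      rcases Nat.le_total (bd v) 1 with h1 | h1
      · rw [Nat.max_eq_right (by omega)]
        omega
      · rw [Nat.max_eq_left (by omega)]
        omega
    · have := hbdle u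
      omega
  have hsum_ge : ∀ u ∈ T', 2 ≤ bd u + m u := by
    intro u _
    simp only [hm_def]
    split <;> omega
  set idx : Γ → ℕ := fun u => T'.toList.idxOf u with hidx_def
  have hidx_inj : ∀ u ∈ T', ∀ u' ∈ T', idx u = idx u' → u = u' := by
    intro u hu u' hu' h
    exact (List.idxOf_inj (Finset.mem_toList.2 hu)).1 h
  set aF : Γ → ℕ := fun u => 2 * idx u + 1 with haF_def
  set bF : Γ → ℕ := fun u => 2 * idx u + 2 with hbF_def
  set Link : Γ → Γ → Prop := fun x y =>
    x ∈ T' ∧ ((y = w (aF x) ∧ 1 ≤ m x) ∨ (y = w (bF x) ∧ 2 ≤ m x)) with hLink_def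
  set Spine : Γ → Γ → Prop := fun x y => ∃ n : ℕ, x = w n ∧ y = w (n + 1) with hSpine_def
  set R : Γ → Γ → Prop := fun x y => B x y ∨ Spine x y ∨ Spine y x ∨ Link x y ∨ Link y x
    with hR_def
  have hRsym : ∀ x y, R x y → R y x := by
    rintro x y (h | h | h | h | h)
    · exact Or.inl (hBsym _ _ h)
    · exact Or.inr (Or.inr (Or.inl h))
    · exact Or.inr (Or.inl h)
    · exact Or.inr (Or.inr (Or.inr (Or.inr h)))
    · exact Or.inr (Or.inr (Or.inr (Or.inl h)))
  have hLink_snd : ∀ x y, Link x y → y ∉ T' := by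
    rintro x y ⟨_, ⟨rfl, _⟩ | ⟨rfl, _⟩⟩ <;> exact hwnot _
  have hRirr : ∀ x, ¬ R x x := by
    rintro x (h | ⟨n, h1, h2⟩ | ⟨n, h1, h2⟩ | h | h)
    · exact hBirr x h
    · rw [h1] at h2; exact absurd (hwinj h2) (by omega)
    · rw [h1] at h2; exact absurd (hwinj h2) (by omega)
    · exact hLink_snd _ _ h h.1
    · exact hLink_snd _ _ h h.1
  -- neighbour bound for T' vertices
  have hnbrT : ∀ x ∈ T', {y | R x y} ⊆ {y | B x y} ∪ {y | Link x y} := by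
    intro x hx y hy
    rcases hy with h | ⟨n, h1, _⟩ | ⟨n, _, h2⟩ | h | h
    · exact Or.inl h
    · exact absurd (h1 ▸ hx) (hwnot n)
    · exact absurd (h2 ▸ hx) (hwnot (n + 1))
    · exact Or.inr h
    · exact absurd hx (hLink_snd _ _ h)
  have hLinkcard : ∀ x, ({y | Link x y}).encard ≤ (m x : ℕ∞) := by
    intro x
    rcases Nat.lt_or_ge (m x) 1 with h1 | h1
    · have : {y | Link x y} = ∅ := by
        ext y
        simp only [hLink_def, mem_setOf_eq, mem_empty_iff_false, iff_false]
        rintro ⟨_, ⟨_, h⟩ | ⟨_, h⟩⟩ <;> omega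
      rw [this, Set.encard_empty]
      exact zero_le
    rcases Nat.lt_or_ge (m x) 2 with h2 | h2
    · have : {y | Link x y} ⊆ {w (aF x)} := by
        rintro y ⟨_, ⟨rfl, _⟩ | ⟨rfl, h⟩⟩
        · exact rfl
        · omega
      refine le_trans (encard_mono this) ?_
      rw [Set.encard_singleton]
      exact_mod_cast h1
    · have : {y | Link x y} ⊆ {w (aF x), w (bF x)} := by
        rintro y ⟨_, ⟨rfl, _⟩ | ⟨rfl, _⟩⟩
        · exact Or.inl rfl
        · exact Or.inr rfl
      refine le_trans (encard_mono this) ?_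
      refine le_trans (Set.encard_insert_le _ _) ?_
      rw [Set.encard_singleton]
      exact_mod_cast h2
  have hdegT : ∀ x ∈ T', ({y | R x y}).encard ≤ (d : ℕ∞) := by
    intro x hx
    calc ({y | R x y}).encard ≤ ({y | B x y} ∪ {y | Link x y}).encard :=
          encard_mono (hnbrT x hx)
      _ ≤ ({y | B x y}).encard + ({y | Link x y}).encard := Set.encard_union_le _ _
      _ ≤ (bd x : ℕ∞) + (m x : ℕ∞) := by
          rw [hcast x]
          exact add_le_add le_rfl (hLinkcard x)
      _ = ((bd x + m x : ℕ) : ℕ∞) := by push_cast; rfl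
      _ ≤ (d : ℕ∞) := by exact_mod_cast hsum_le x hx
  -- neighbour bound for spine vertices
  have hnbrW : ∀ n : ℕ, {y | R (w n) y} ⊆
      insert (w (n + 1)) (insert (w (n - 1)) {y | y ∈ T' ∧ (aF y = n ∨ bF y = n)}) := by
    intro n y hy
    rcases hy with h | ⟨k, h1, h2⟩ | ⟨k, h1, h2⟩ | h | h
    · exact absurd (hBmem _ _ h).1 (hwnot n)
    · have : k = n := hwinj h1.symm
      rw [h2, this]
      exact Or.inl rfl
    · have : n = k + 1 := hwinj h2
      rw [h1, this]
      right; left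
      norm_num
    · exact absurd h.1 (hwnot n)
    · rcases h with ⟨hyT, ⟨heq, _⟩ | ⟨heq, _⟩⟩
      · right; right
        exact ⟨hyT, Or.inl (hwinj heq.symm)⟩
      · right; right
        exact ⟨hyT, Or.inr (hwinj heq.symm)⟩
  have hsubW : ∀ n : ℕ, ({y | y ∈ T' ∧ (aF y = n ∨ bF y = n)}).encard ≤ 1 := by
    intro n
    rw [Set.encard_le_one_iff]
    rintro y y' ⟨hy, hy1⟩ ⟨hy', hy1'⟩
    apply hidx_inj y hy y' hy'
    simp only [haF_def, hbF_def] at hy1 hy1'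
    omega
  have hdegW : ∀ n : ℕ, ({y | R (w n) y}).encard ≤ (d : ℕ∞) := by
    intro n
    refine le_trans (encard_mono (hnbrW n)) ?_
    refine le_trans (Set.encard_insert_le _ _) ?_
    refine le_trans (add_le_add (Set.encard_insert_le _ _) le_rfl) ?_
    refine le_trans (add_le_add (add_le_add (hsubW n) le_rfl) le_rfl) ?_
    have : (1 : ℕ∞) + 1 + 1 = ((3 : ℕ) : ℕ∞) := by norm_num
    rw [this]
    exact_mod_cast hd
  -- connectivity
  have hRspine : ∀ k : ℕ, R (w k) (w (k + 1)) := fun k => Or.inr (Or.inl ⟨k, rfl, rfl⟩)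
  have hup : ∀ n : ℕ, ReflTransGen R (w 0) (w n) := by
    intro n
    induction n with
    | zero => exact ReflTransGen.refl
    | succ k ih => exact ih.tail (hRspine k)
  have hhub : ∀ x : Γ, ReflTransGen R (w 0) x := by
    intro x
    by_cases hx : x ∈ T'
    · have h1 : ReflTransGen R (w 0) (w (aF v)) := hup _
      have h2 : R (w (aF v)) v := Or.inr (Or.inr (Or.inr (Or.inr ⟨hvT, Or.inl ⟨rfl, hm1v⟩⟩)))
      have h3 : ReflTransGen B v x := hconn x hx
      have h4 : ReflTransGen R v x := ReflTransGen.mono (fun a b h => Or.inl h) _ _ h3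
      exact (h1.tail h2).trans h4
    · obtain ⟨n, rfl⟩ := hwsurj x hx
      exact hup n
  -- pivot facts
  have hp : ∀ y, R (w 0) y → y = w 1 := by
    rintro y (h | ⟨k, h1, h2⟩ | ⟨k, h1, h2⟩ | h | h)
    · exact absurd (hBmem _ _ h).1 (hwnot 0)
    · have : k = 0 := hwinj h1.symm
      rw [h2, this]
    · exact absurd (hwinj h2 : (0:ℕ) = k + 1) (by omega)
    · exact absurd h.1 (hwnot 0)
    · rcases h with ⟨_, ⟨heq, _⟩ | ⟨heq, _⟩⟩
      · exact absurd (hwinj heq.symm) (by simp only [haF_def]; omega)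
      · exact absurd (hwinj heq.symm) (by simp only [hbF_def]; omega)
  have hoth : ∀ x, x ≠ w 0 → ∃ y z, y ≠ z ∧ R x y ∧ R x z := by
    intro x hx0
    by_cases hx : x ∈ T'
    · rcases Nat.lt_or_ge (bd x) 1 with hb | hb
      · -- bd x = 0, m x ≥ 2
        have hm2 : 2 ≤ m x := by
          have := hsum_ge x hx
          omega
        refine ⟨w (aF x), w (bF x), ?_, ?_, ?_⟩
        · intro hw
          have := hwinj hw
          simp only [haF_def, hbF_def] at this
          omega
        · exact Or.inr (Or.inr (Or.inr (Or.inl ⟨hx, Or.inl ⟨rfl, by omega⟩⟩)))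
        · exact Or.inr (Or.inr (Or.inr (Or.inl ⟨hx, Or.inr ⟨rfl, hm2⟩⟩)))
      rcases Nat.lt_or_ge (bd x) 2 with hb2 | hb2
      · -- bd x = 1, m x ≥ 1
        have hm1 : 1 ≤ m x := by
          have := hsum_ge x hx
          omega
        have hne : ({y | B x y}).Nonempty := by
          rw [← Set.one_le_encard_iff_nonempty, hcast x]
          exact_mod_cast hb
        obtain ⟨y0, hy0⟩ := hne
        refine ⟨y0, w (aF x), ?_, Or.inl hy0, ?_⟩
        · intro hw
          exact hwnot (aF x) (hw ▸ (hBmem _ _ hy0).2)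
        · exact Or.inr (Or.inr (Or.inr (Or.inl ⟨hx, Or.inl ⟨rfl, hm1⟩⟩)))
      · -- bd x ≥ 2
        have : 1 < ({y | B x y}).encard := by
          rw [hcast x]
          exact_mod_cast hb2
        rw [Set.one_lt_encard_iff] at this
        obtain ⟨y, z, hy, hz, hyz⟩ := this
        exact ⟨y, z, hyz, Or.inl hy, Or.inl hz⟩
    · obtain ⟨n, rfl⟩ := hwsurj x hx
      rcases n with _ | k
      · exact absurd rfl hx0
      · refine ⟨w k, w (k + 2), ?_, ?_, ?_⟩
        · intro hw
          exact absurd (hwinj hw) (by omega)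
        · exact Or.inr (Or.inr (Or.inl ⟨k, rfl, rfl⟩))
        · exact Or.inr (Or.inl ⟨k + 1, rfl, rfl⟩)
  refine ⟨ofRel R, ⟨?_, ?_, ?_, ?_⟩, ?_, ?_, ?_⟩
  · intro x y
    rcases hxy : ofRel R (x, y) with h | h
    · rcases hyx : ofRel R (y, x) with h2 | h2
      · rfl
      · exact absurd (ofRel_eq_false.1 hxy) (fun hn => hn (hRsym _ _ (ofRel_eq_true.1 hyx)))
    · exact (ofRel_eq_true.2 (hRsym _ _ (ofRel_eq_true.1 hxy))).symm
  · intro x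
    exact ofRel_eq_false.2 (hRirr x)
  · intro x y
    have hconnR : ∀ a b : Γ, ReflTransGen R a b :=
      conn_of_hub hRsym (w 0) hhub
    exact ReflTransGen.mono (fun a b h => ofRel_eq_true.2 h) _ _ (hconnR x y)
  · intro x
    have : {y : Γ | ofRel R (x, y) = true} = {y | R x y} := by
      ext y
      exact ofRel_eq_true
    rw [this]
    by_cases hx : x ∈ T'
    · exact hdegT x hx
    · obtain ⟨n, rfl⟩ := hwsurj x hx
      exact hdegW n
  · exact not_isBadGraph_ofRel hRirr hp hoth
  · intro x y h
    exact ofRel_eq_true.2 (Or.inl h)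
  · intro x y hxT hyT hnB
    refine ofRel_eq_false.2 ?_
    rintro (h | ⟨n, h1, _⟩ | ⟨n, _, h2⟩ | h | h)
    · exact hnB h
    · exact hwnot n (h1 ▸ hxT)
    · exact hwnot (n + 1) (h2 ▸ hxT)
    · exact hLink_snd _ _ h hyT
    · exact hLink_snd _ _ h hxT
end Spine
end Stmt11

namespace Stmt11
section Density
open Relation Set
variable {Γ : Type*} [Group Γ]

lemma ray_good (d : ℕ) (hd : 2 ≤ d) (r : ℕ → Γ) (hbij : Function.Bijective r) :
    IsConnGraphDeg d (ofRel (rayRel r)) ∧ ¬ IsBadGraph (ofRel (rayRel r)) := by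
  obtain ⟨hinj, hsurj⟩ := hbij
  refine ⟨⟨?_, ?_, ?_, ?_⟩, ?_⟩
  · exact ofRel_symm (rayRel_symm r)
  · intro x
    exact ofRel_eq_false.2 (rayRel_irrefl hinj x)
  · intro x y
    exact ReflTransGen.mono (fun a b h => ofRel_eq_true.2 h) _ _ (rayRel_conn hsurj x y)
  · intro x
    have : {y : Γ | ofRel (rayRel r) (x, y) = true} = {y | rayRel r x y} := by
      ext y; exact ofRel_eq_true
    rw [this]
    exact le_trans (rayRel_encard hinj x) (by exact_mod_cast hd)
  · refine not_isBadGraph_ofRel (rayRel_irrefl hinj) (p := r 0) (q₀ := r 1) ?_ ?_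
    · intro y hy
      rcases rayRel_nbr hinj 0 hy with h | ⟨m, hm, _⟩
      · exact h
      · omega
    · intro x hx
      obtain ⟨n, rfl⟩ := hsurj x
      rcases n with _ | k
      · exact absurd rfl hx
      · refine ⟨r k, r (k + 2), fun hw => absurd (hinj hw) (by omega), ?_, ?_⟩
        · exact ⟨k, Or.inr ⟨rfl, rfl⟩⟩
        · exact ⟨k + 1, Or.inl ⟨rfl, rfl⟩⟩

lemma chain_rtg {G : Γ × Γ → Bool} {T' : Finset Γ} :
    ∀ (a : Γ) (l : List Γ), List.Chain (fun s t => G (s, t) = true) a l →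
    (∀ u ∈ a :: l, u ∈ T') →
    ∀ u ∈ a :: l, ReflTransGen (fun s t : Γ => s ∈ T' ∧ t ∈ T' ∧ G (s, t) = true) a u := by
  intro a l
  induction l generalizing a with
  | nil =>
    intro _ _ u hu
    rw [List.mem_singleton] at hu
    subst hu
    exact ReflTransGen.refl
  | cons b t ih =>
    intro hch hmem u hu
    rw [show List.Chain (fun s t => G (s, t) = true) a (b :: t) ↔ _ from List.isChain_cons_cons] at hch
    have hstep : (fun s t : Γ => s ∈ T' ∧ t ∈ T' ∧ G (s, t) = true) a b :=
      ⟨hmem a (by simp), hmem b (by simp), hch.1⟩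
    have hmem' : ∀ u ∈ b :: t, u ∈ T' := fun u hu => hmem u (List.mem_cons_of_mem _ hu)
    rcases List.mem_cons.1 hu with rfl | hu'
    · exact ReflTransGen.refl
    · exact ReflTransGen.head hstep (ih b hch.2 hmem' u hu')

theorem density_core [Countable Γ] [Infinite Γ] (d : ℕ) (hd : 2 ≤ d)
    (G : Γ × Γ → Bool) (hG : IsConnGraphDeg d G) (I : Finset (Γ × Γ)) :
    ∃ G' : Γ × Γ → Bool, IsConnGraphDeg d G' ∧ ¬ IsBadGraph G' ∧ ∀ q ∈ I, G' q = G q := by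
  classical
  obtain ⟨hsym, hirr, hconn, hdeg⟩ := hG
  set T₀ : Finset Γ := I.image Prod.fst ∪ I.image Prod.snd with hT₀_def
  by_cases hT₀ : T₀ = ∅
  · -- no constraints: use a plain ray on an enumeration of Γ
    obtain ⟨den⟩ := nonempty_denumerable Γ
    set r : ℕ → Γ := fun n => (Denumerable.eqv Γ).symm n with hr_def
    have hbij : Function.Bijective r := (Denumerable.eqv Γ).symm.bijective
    obtain ⟨h1, h2⟩ := ray_good d hd r hbij
    refine ⟨ofRel (rayRel r), h1, h2, ?_⟩
    intro q hq
    exfalso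
    have : q.1 ∈ T₀ := Finset.mem_union_left _ (Finset.mem_image.2 ⟨q, hq, rfl⟩)
    rw [hT₀] at this
    exact absurd this (Finset.notMem_empty _)
  · obtain ⟨x₀, hx₀⟩ := Finset.nonempty_iff_ne_empty.2 hT₀
    -- choose paths from x₀ to each point of T₀
    have hpath : ∀ x : Γ, ∃ l : List Γ, List.Chain (fun s t => G (s, t) = true) x₀ l ∧
        (x₀ :: l).getLast (List.cons_ne_nil _ _) = x := by
      intro x
      exact List.exists_isChain_cons_of_relationReflTransGen (hconn x₀ x)
    choose pathL hpathC hpathE using hpath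
    set T' : Finset Γ := T₀.biUnion (fun x => (x₀ :: pathL x).toFinset) with hT'_def
    have hmemT' : ∀ x ∈ T₀, ∀ u ∈ (x₀ :: pathL x), u ∈ T' := by
      intro x hx u hu
      exact Finset.mem_biUnion.2 ⟨x, hx, List.mem_toFinset.2 hu⟩
    have hx₀T' : x₀ ∈ T' := hmemT' x₀ hx₀ x₀ (by simp)
    have hT₀T' : T₀ ⊆ T' := by
      intro x hx
      have := List.getLast_mem (List.cons_ne_nil x₀ (pathL x))
      rw [hpathE x] at this
      exact hmemT' x hx x this
    set B : Γ → Γ → Prop := fun s t => s ∈ T' ∧ t ∈ T' ∧ G (s, t) = true with hB_def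
    have hBsym : ∀ x y, B x y → B y x := by
      rintro x y ⟨h1, h2, h3⟩
      exact ⟨h2, h1, by rw [hsym]; exact h3⟩
    have hBirr : ∀ x, ¬ B x x := by
      rintro x ⟨_, _, h3⟩
      rw [hirr] at h3
      exact Bool.false_ne_true h3
    have hBmem : ∀ x y, B x y → x ∈ T' ∧ y ∈ T' := fun x y h => ⟨h.1, h.2.1⟩
    have hBdeg : ∀ x, {y | B x y}.encard ≤ (d : ℕ∞) := by
      intro x
      exact le_trans (encard_mono (fun y hy => hy.2.2)) (hdeg x)
    have hconnT' : ∀ u ∈ T', ReflTransGen B x₀ u := by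
      intro u hu
      obtain ⟨x, hx, hu'⟩ := Finset.mem_biUnion.1 hu
      exact chain_rtg x₀ (pathL x) (hpathC x) (hmemT' x hx) u (List.mem_toFinset.1 hu')
    -- escape vertex
    have hescape : ∃ v z, v ∈ T' ∧ z ∉ T' ∧ G (v, z) = true := by
      by_contra hno
      push_neg at hno
      have hclosed : ∀ y : Γ, y ∈ T' := by
        intro y
        have hrt := hconn x₀ y
        induction hrt with
        | refl => exact hx₀T'
        | @tail b c _ hbc ih =>
          by_contra hc
          exact hno b c ih hc hbc
      exact Set.infinite_univ (α := Γ)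
        (Set.Finite.subset T'.finite_toSet (fun y _ => hclosed y))
    obtain ⟨v, z, hvT, hzT, hGvz⟩ := hescape
    have hvdeg : {y | B v y}.encard + 1 ≤ (d : ℕ∞) := by
      have hzB : z ∉ {y | B v y} := fun h => hzT h.2.1
      have hins : (insert z {y | B v y}).encard = {y | B v y}.encard + 1 :=
        Set.encard_insert_of_notMem hzB
      have hins_sub : insert z {y | B v y} ⊆ {y | G (v, y) = true} := by
        rintro y (rfl | hy)
        · exact hGvz
        · exact hy.2.2
      rw [← hins]
      exact le_trans (encard_mono hins_sub) (hdeg v)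
    have hconnv : ∀ u ∈ T', ReflTransGen B v u := by
      intro u hu
      exact (rtg_symm hBsym (hconnT' v hvT)).trans (hconnT' u hu)
    -- fresh vertices
    set S : Set Γ := (↑T' : Set Γ)ᶜ with hS_def
    have hSinf : S.Infinite := Set.Finite.infinite_compl T'.finite_toSet
    haveI : Infinite ↥S := hSinf.to_subtype
    obtain ⟨denS⟩ := nonempty_denumerable ↥S
    set w : ℕ → Γ := fun n => ((Denumerable.eqv ↥S).symm n : Γ) with hw_def
    have hwinj : Function.Injective w := by
      intro a b h
      have := (Denumerable.eqv ↥S).symm.injective (Subtype.ext h)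
      exact this
    have hwnot : ∀ n, w n ∉ T' := by
      intro n hn
      have h2 : w n ∈ (↑T' : Set Γ)ᶜ := ((Denumerable.eqv ↥S).symm n).2
      exact h2 (Finset.mem_coe.2 hn)
    have hwsurj : ∀ z', z' ∉ T' → ∃ n, w n = z' := by
      intro z' hz'
      refine ⟨(Denumerable.eqv ↥S) ⟨z', by rw [hS_def]; exact fun h => hz' h⟩, ?_⟩
      simp [hw_def]
    have hagree_mem : ∀ q ∈ I, q.1 ∈ T' ∧ q.2 ∈ T' := by
      intro q hq
      constructor
      · exact hT₀T' (Finset.mem_union_left _ (Finset.mem_image.2 ⟨q, hq, rfl⟩))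
      · exact hT₀T' (Finset.mem_union_right _ (Finset.mem_image.2 ⟨q, hq, rfl⟩))
    rcases eq_or_lt_of_le hd with hd2 | hd3
    · -- d = 2 : ray through pathlist
      have hBdeg2 : ∀ x, {y | B x y}.encard ≤ 2 := by
        intro x
        have := hBdeg x
        rwa [← hd2] at this
      have hvdeg1 : {y | B v y}.encard ≤ 1 := by
        have := hvdeg
        rw [← hd2] at this
        have h2 : {y | B v y}.encard + 1 ≤ 1 + 1 := by
          rwa [show ((2:ℕ):ℕ∞) = 1 + 1 by norm_num] at this
        exact (WithTop.add_le_add_iff_right (by simp : (1:ℕ∞) ≠ ⊤)).1 h2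
      obtain ⟨l, hnd, htf, hch, hlast, hadj⟩ :=
        pathlist T'.card T' B v rfl hBsym hBirr
          (fun x y h => ⟨h.1, h.2.1⟩) hBdeg2 hconnv hvT hvdeg1
      set r : ℕ → Γ := fun n => if h : n < l.length then l.get ⟨n, h⟩ else w (n - l.length)
        with hr_def
      have hrT : ∀ n (h : n < l.length), r n = l.get ⟨n, h⟩ := by
        intro n h
        rw [hr_def]
        simp [h]
      have hrW : ∀ n, l.length ≤ n → r n = w (n - l.length) := by
        intro n h
        rw [hr_def]
        simp [Nat.not_lt.2 h]
      have hmem_l : ∀ u, u ∈ l ↔ u ∈ T' := by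
        intro u
        rw [← htf, List.mem_toFinset]
      have hrbij : Function.Bijective r := by
        constructor
        · intro i j hij
          by_cases hi : i < l.length <;> by_cases hj : j < l.length
          · rw [hrT i hi, hrT j hj] at hij
            have := (List.Nodup.get_inj_iff hnd).1 hij
            simpa using congrArg Fin.val this
          · rw [hrT i hi, hrW j (Nat.not_lt.1 hj)] at hij
            have hT : l.get ⟨i, hi⟩ ∈ T' := (hmem_l _).1 (List.get_mem l ⟨i, hi⟩)
            rw [hij] at hT
            exact absurd hT (hwnot _)
          · rw [hrW i (Nat.not_lt.1 hi), hrT j hj] at hij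
            have hT : l.get ⟨j, hj⟩ ∈ T' := (hmem_l _).1 (List.get_mem l ⟨j, hj⟩)
            rw [← hij] at hT
            exact absurd hT (hwnot _)
          · rw [hrW i (Nat.not_lt.1 hi), hrW j (Nat.not_lt.1 hj)] at hij
            have := hwinj hij
            omega
        · intro x
          by_cases hx : x ∈ T'
          · obtain ⟨⟨i, hi⟩, hg⟩ := List.mem_iff_get.1 ((hmem_l x).2 hx)
            exact ⟨i, by rw [hrT i hi]; exact hg⟩
          · obtain ⟨n, hn⟩ := hwsurj x hx
            refine ⟨n + l.length, ?_⟩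
            rw [hrW _ (by omega)]
            simpa using hn
      have hkey : ∀ x y, x ∈ T' → y ∈ T' → (rayRel r x y ↔ B x y) := by
        intro x y hx hy
        constructor
        · rintro ⟨n, ⟨h1, h2⟩ | ⟨h1, h2⟩⟩
          · have hn : n < l.length := by
              by_contra hn
              rw [hrW n (Nat.not_lt.1 hn)] at h1
              exact hwnot _ (h1 ▸ hx)
            have hn1 : n + 1 < l.length := by
              by_contra hn1
              rw [hrW (n+1) (Nat.not_lt.1 hn1)] at h2
              exact hwnot _ (h2 ▸ hy)
            have hc := List.isChain_iff_getElem.1 hch n (by omega)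
            rw [hrT n hn] at h1
            rw [hrT (n+1) hn1] at h2
            rw [h1, h2]
            simpa using hc
          · have hn : n < l.length := by
              by_contra hn
              rw [hrW n (Nat.not_lt.1 hn)] at h1
              exact hwnot _ (h1 ▸ hy)
            have hn1 : n + 1 < l.length := by
              by_contra hn1
              rw [hrW (n+1) (Nat.not_lt.1 hn1)] at h2
              exact hwnot _ (h2 ▸ hx)
            have hc := List.isChain_iff_getElem.1 hch n (by omega)
            rw [hrT n hn] at h1
            rw [hrT (n+1) hn1] at h2
            apply hBsym
            rw [h1, h2]
            simpa using hc
        · intro hB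
          obtain ⟨i, hi⟩ := hadj x y hB
          rcases hi with ⟨h1, h2⟩ | ⟨h1, h2⟩
          · obtain ⟨hi1, hg1⟩ := List.getElem?_eq_some_iff.1 h1
            obtain ⟨hi2, hg2⟩ := List.getElem?_eq_some_iff.1 h2
            exact ⟨i, Or.inl ⟨by rw [hrT i hi1]; exact hg1.symm ▸ rfl,
              by rw [hrT (i+1) hi2]; exact hg2.symm ▸ rfl⟩⟩
          · obtain ⟨hi1, hg1⟩ := List.getElem?_eq_some_iff.1 h1
            obtain ⟨hi2, hg2⟩ := List.getElem?_eq_some_iff.1 h2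
            exact ⟨i, Or.inr ⟨by rw [hrT i hi1]; exact hg1.symm ▸ rfl,
              by rw [hrT (i+1) hi2]; exact hg2.symm ▸ rfl⟩⟩
      obtain ⟨h1, h2⟩ := ray_good d hd r hrbij
      refine ⟨ofRel (rayRel r), h1, h2, ?_⟩
      intro q hq
      obtain ⟨hq1, hq2⟩ := hagree_mem q hq
      by_cases hGq : G q = true
      · rw [hGq]
        refine ofRel_eq_true.2 ((hkey q.1 q.2 hq1 hq2).2 ⟨hq1, hq2, ?_⟩)
        rw [show ((q.1, q.2) : Γ × Γ) = q from rfl]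
        exact hGq
      · rw [Bool.not_eq_true] at hGq
        rw [hGq]
        refine ofRel_eq_false.2 (fun hr => ?_)
        have := ((hkey q.1 q.2 hq1 hq2).1 hr).2.2
        rw [show ((q.1, q.2) : Γ × Γ) = q from rfl] at this
        rw [hGq] at this
        exact Bool.false_ne_true this
    · -- d ≥ 3 : spine construction
      obtain ⟨G', hG'1, hG'2, hG'B, hG'nB⟩ :=
        spine_lemma d (by omega) T' B w v hBsym hBirr
          (fun x y h => ⟨h.1, h.2.1⟩) hBdeg hvT hconnv hvdeg hwinj hwnot hwsurj
      refine ⟨G', hG'1, hG'2, ?_⟩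
      intro q hq
      obtain ⟨hq1, hq2⟩ := hagree_mem q hq
      by_cases hGq : G q = true
      · rw [hGq]
        have : B q.1 q.2 := ⟨hq1, hq2, by rw [show ((q.1, q.2) : Γ × Γ) = q from rfl]; exact hGq⟩
        have := hG'B q.1 q.2 this
        rwa [show ((q.1, q.2) : Γ × Γ) = q from rfl] at this
      · rw [Bool.not_eq_true] at hGq
        rw [hGq]
        have hnB : ¬ B q.1 q.2 := by
          rintro ⟨_, _, h3⟩
          rw [show ((q.1, q.2) : Γ × Γ) = q from rfl, hGq] at h3
          exact Bool.false_ne_true h3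
        have := hG'nB q.1 q.2 hq1 hq2 hnB
        rwa [show ((q.1, q.2) : Γ × Γ) = q from rfl] at this
end Density
end Stmt11

namespace Stmt11
section Colour
open Relation Set Encodable
variable {Γ : Type*} [Group Γ]

/-- translate: the neighbour `γ⁻¹ · H` of `H`. -/
def nbr (γ : Γ) (H : Γ × Γ → Bool) : Γ × Γ → Bool := logicAct γ⁻¹ H

lemma nbr_apply (γ : Γ) (H : Γ × Γ → Bool) (x y : Γ) :
    nbr γ H (x, y) = H (γ * x, γ * y) := by
  simp [nbr, logicAct_apply]

lemma nbr_apply' (γ : Γ) (H : Γ × Γ → Bool) (q : Γ × Γ) :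
    nbr γ H q = H (γ * q.1, γ * q.2) := by
  simp [nbr, logicAct]

lemma nbr_nbr_inv (γ : Γ) (H : Γ × Γ → Bool) : nbr γ⁻¹ (nbr γ H) = H := by
  simp [nbr, logicAct_logicAct, logicAct_one]

lemma measurable_logicAct (γ : Γ) :
    Measurable (logicAct γ : (Γ × Γ → Bool) → (Γ × Γ → Bool)) :=
  measurable_pi_lambda _ fun _ => measurable_pi_apply _

lemma measSet_eval (a : Γ × Γ) (b : Bool) : MeasurableSet {H : Γ × Γ → Bool | H a = b} := by
  show MeasurableSet ((fun H : Γ × Γ → Bool => H a) ⁻¹' {b})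
  exact (measurable_pi_apply a) (measurableSet_singleton b)

variable [Countable Γ] [Encodable Γ] (d : ℕ)

/-- `s` separates `H` from each of its neighbours. -/
def Qsep (s : Finset (Γ × Γ)) (H : Γ × Γ → Bool) : Prop :=
  ∀ γ : Γ, H (1, γ) = true → ∃ q ∈ s, H (γ * q.1, γ * q.2) ≠ H q

def sOf (n : ℕ) : Finset (Γ × Γ) := (Encodable.decode n).getD ∅

lemma sOf_encode (s : Finset (Γ × Γ)) : sOf (Encodable.encode s) = s := by
  simp [sOf, Encodable.encodek]

open scoped Classical in
noncomputable def fIdx (H : Γ × Γ → Bool) : ℕ :=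
  if h : ∃ n, Qsep (sOf n) H then Nat.find h else 0

lemma fIdx_spec {H : Γ × Γ → Bool} (h : ∃ n, Qsep (sOf n) H) : Qsep (sOf (fIdx H)) H := by
  classical
  rw [fIdx]
  rw [dif_pos h]
  exact Nat.find_spec h

def filt (s : Finset (Γ × Γ)) (H : Γ × Γ → Bool) : Finset (Γ × Γ) :=
  s.filter (fun q => H q = true)

noncomputable def Fcol (H : Γ × Γ → Bool) : ℕ :=
  Nat.pair (fIdx H) (Encodable.encode (filt (sOf (fIdx H)) H))

/-- the greedy recursion -/
noncomputable def pick (p : Fin (d + 1) → Prop) : Fin (d + 1) := by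
  classical
  exact if hs : (Finset.univ.filter p).Nonempty then (Finset.univ.filter p).min' hs else 0

lemma pick_spec {p : Fin (d + 1) → Prop} (h : ∃ c, p c) : p (pick d p) := by
  classical
  obtain ⟨c, hc⟩ := h
  have hs : (Finset.univ.filter p).Nonempty := ⟨c, by simp [hc]⟩
  rw [pick]
  simp only [dif_pos hs]
  have := (Finset.univ.filter p).min'_mem hs
  simpa using this

lemma pick_eq_iff {p : Fin (d + 1) → Prop} {c : Fin (d + 1)} :
    pick d p = c ↔ (p c ∧ ∀ c' < c, ¬ p c') ∨ (c = 0 ∧ ∀ c', ¬ p c') := by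
  classical
  rw [pick]
  split
  · rename_i hs
    constructor
    · rintro rfl
      refine Or.inl ⟨by simpa using (Finset.univ.filter p).min'_mem hs, fun c' hc' hpc' => ?_⟩
      have := (Finset.univ.filter p).min'_le c' (by simp [hpc'])
      omega
    · rintro (⟨hpc, hmin⟩ | ⟨rfl, hnone⟩)
      · refine le_antisymm ((Finset.univ.filter p).min'_le c (by simp [hpc])) ?_
        by_contra hlt
        push_neg at hlt
        exact hmin _ hlt (by simpa using (Finset.univ.filter p).min'_mem hs)
      · obtain ⟨c', hc'⟩ := hs
        simp only [Finset.mem_filter] at hc'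
        exact absurd hc'.2 (hnone c')
  · rename_i hs
    rw [Finset.not_nonempty_iff_eq_empty, Finset.filter_eq_empty_iff] at hs
    constructor
    · rintro rfl
      exact Or.inr ⟨rfl, fun c' => hs (Finset.mem_univ c')⟩
    · rintro (⟨hpc, _⟩ | ⟨rfl, _⟩)
      · exact absurd hpc (hs (Finset.mem_univ c))
      · rfl

noncomputable def gre : ℕ → (Γ × Γ → Bool) → Fin (d + 1)
  | 0 => fun _ => 0
  | n + 1 => fun H => pick d (fun c =>
      ∀ γ : Γ, H (1, γ) = true → Fcol (nbr γ H) < Fcol H → gre n (nbr γ H) ≠ c)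

noncomputable def Ccol (H : Γ × Γ → Bool) : Fin (d + 1) := gre d (Fcol H + 1) H

end Colour
end Stmt11

namespace Stmt11
section Colour2
open Relation Set Encodable
variable {Γ : Type*} [Group Γ] [Countable Γ] [Encodable Γ] {d : ℕ}

/-- a good connected graph -/
def GoodG (d : ℕ) (H : Γ × Γ → Bool) : Prop := IsConnGraphDeg d H ∧ ¬ IsBadGraph H

lemma goodG_nbr {H : Γ × Γ → Bool} (h : GoodG d H) (γ : Γ) : GoodG d (nbr γ H) :=
  ⟨isConnGraphDeg_logicAct h.1 γ⁻¹, fun hb => h.2 (isBadGraph_logicAct hb)⟩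

lemma nbr_ne_of_good {H : Γ × Γ → Bool} (h : GoodG d H) {γ : Γ} (hγ : H (1, γ) = true) :
    nbr γ H ≠ H := by
  intro heq
  apply h.2
  refine ⟨γ, 1, by simpa using hγ, ?_⟩
  have h2 : logicAct γ (nbr γ H) = logicAct γ H := by rw [heq]
  rw [nbr, logicAct_logicAct, mul_inv_cancel, logicAct_one] at h2
  exact h2.symm

lemma exists_Qsep {H : Γ × Γ → Bool} (h : GoodG d H) : ∃ n, Qsep (sOf n) H := by
  classical
  have hfin : {γ : Γ | H (1, γ) = true}.Finite := by
    rw [← Set.encard_lt_top_iff]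
    exact lt_of_le_of_lt (h.1.2.2.2 1) (by exact_mod_cast WithTop.coe_lt_top d)
  have hq : ∀ γ ∈ {γ : Γ | H (1, γ) = true}, ∃ q : Γ × Γ, nbr γ H q ≠ H q := by
    intro γ hγ
    have := nbr_ne_of_good h hγ
    by_contra hc
    push_neg at hc
    exact this (funext hc)
  choose qsel hqsel using hq
  refine ⟨Encodable.encode (hfin.toFinset.attach.image
    (fun γ => qsel γ.1 (hfin.mem_toFinset.1 γ.2))), ?_⟩
  rw [sOf_encode]
  intro γ hγ
  refine ⟨qsel γ hγ, ?_, ?_⟩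
  · exact Finset.mem_image.2 ⟨⟨γ, hfin.mem_toFinset.2 hγ⟩, Finset.mem_attach _ _, rfl⟩
  · have := hqsel γ hγ
    rwa [nbr_apply'] at this

lemma Fcol_ne_of_nbr {H : Γ × Γ → Bool} (h : GoodG d H) {γ : Γ} (hγ : H (1, γ) = true) :
    Fcol (nbr γ H) ≠ Fcol H := by
  intro heq
  have h1 : fIdx (nbr γ H) = fIdx H ∧
      Encodable.encode (filt (sOf (fIdx (nbr γ H))) (nbr γ H)) =
      Encodable.encode (filt (sOf (fIdx H)) H) := Nat.pair_eq_pair.1 heq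
  have hfilt : filt (sOf (fIdx H)) (nbr γ H) = filt (sOf (fIdx H)) H := by
    have := h1.2
    rw [h1.1] at this
    exact Encodable.encode_injective this
  obtain ⟨q, hqs, hqne⟩ := fIdx_spec (exists_Qsep h) γ hγ
  apply hqne
  have hq1 : q ∈ filt (sOf (fIdx H)) H ↔ q ∈ filt (sOf (fIdx H)) (nbr γ H) := by rw [hfilt]
  simp only [filt, Finset.mem_filter, hqs, true_and] at hq1
  have h3 : nbr γ H q = H q := (Bool.eq_iff_iff.2 (by simpa using hq1)).symm
  rwa [nbr_apply'] at h3

lemma gre_stable : ∀ k : ℕ, ∀ H : Γ × Γ → Bool, Fcol H = k →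
    ∀ n m : ℕ, k < n → k < m → gre d n H = gre d m H := by
  intro k
  induction k using Nat.strong_induction_on with
  | _ k ih =>
    intro H hF n m hn hm
    rcases n with _ | n'
    · omega
    rcases m with _ | m'
    · omega
    show pick d _ = pick d _
    congr 1
    funext c
    refine propext (forall_congr' fun γ => imp_congr_right fun hγ => imp_congr_right fun hlt => ?_)
    rw [hF] at hlt
    rw [ih (Fcol (nbr γ H)) hlt (nbr γ H) rfl n' m' (by omega) (by omega)]

lemma exists_pick {H : Γ × Γ → Bool} (h : GoodG d H) (n : ℕ) :
    ∃ c : Fin (d + 1), ∀ γ : Γ, H (1, γ) = true → Fcol (nbr γ H) < Fcol H →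
      gre d n (nbr γ H) ≠ c := by
  by_contra hc
  push_neg at hc
  have hsub : (Set.univ : Set (Fin (d + 1))) ⊆
      (fun γ => gre d n (nbr γ H)) '' {γ : Γ | H (1, γ) = true} := by
    intro c _
    obtain ⟨γ, hγ, _, heq⟩ := hc c
    exact ⟨γ, hγ, heq⟩
  have h1 : (Set.univ : Set (Fin (d + 1))).encard ≤ (d : ℕ∞) := by
    calc (Set.univ : Set (Fin (d + 1))).encard
        ≤ ((fun γ => gre d n (nbr γ H)) '' {γ : Γ | H (1, γ) = true}).encard := encard_mono hsub
      _ ≤ ({γ : Γ | H (1, γ) = true}).encard := Set.encard_image_le _ _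
      _ ≤ (d : ℕ∞) := h.1.2.2.2 1
  rw [Set.encard_univ] at h1
  have h2 : (ENat.card (Fin (d + 1))) = ((d + 1 : ℕ) : ℕ∞) := by
    simp [ENat.card_eq_coe_fintype_card]
  rw [h2] at h1
  have := (Nat.cast_le (α := ℕ∞)).1 h1
  omega

lemma Ccol_sub_ne {H : Γ × Γ → Bool} (h : GoodG d H) {γ : Γ} (hγ : H (1, γ) = true)
    (hlt : Fcol (nbr γ H) < Fcol H) : Ccol d (nbr γ H) ≠ Ccol d H := by
  have hCH : Ccol d H = pick d (fun c => ∀ γ : Γ, H (1, γ) = true →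
      Fcol (nbr γ H) < Fcol H → gre d (Fcol H) (nbr γ H) ≠ c) := rfl
  have hspec := pick_spec d (exists_pick h (Fcol H))
  rw [← hCH] at hspec
  have := hspec γ hγ hlt
  rwa [gre_stable (Fcol (nbr γ H)) (nbr γ H) rfl (Fcol H) (Fcol (nbr γ H) + 1) hlt (by omega)]
    at this

lemma Ccol_ne {H : Γ × Γ → Bool} {γ : Γ} (hH : GoodG d H)
    (hedge : H (1, γ) = true) : Ccol d H ≠ Ccol d (nbr γ H) := by
  have hH' : GoodG d (nbr γ H) := goodG_nbr hH γ
  have hne := Fcol_ne_of_nbr hH hedge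
  rcases lt_or_gt_of_ne hne with hlt | hgt
  · exact (Ccol_sub_ne hH hedge hlt).symm
  · have hedge' : nbr γ H (1, γ⁻¹) = true := by
      rw [nbr_apply, mul_one, mul_inv_cancel, hH.1.1 γ 1]
      exact hedge
    have hkey := Ccol_sub_ne hH' hedge' (by rwa [nbr_nbr_inv])
    rwa [nbr_nbr_inv] at hkey
end Colour2
end Stmt11

namespace Stmt11
section Colour3
open Relation Set Encodable
variable {Γ : Type*} [Group Γ] [Countable Γ] [Encodable Γ] {d : ℕ}

lemma measSet_ne (a b : Γ × Γ) : MeasurableSet {H : Γ × Γ → Bool | H a ≠ H b} := by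
  have : {H : Γ × Γ → Bool | H a ≠ H b} =
      ({H : Γ × Γ → Bool | H a = true} ∩ {H : Γ × Γ → Bool | H b = false}) ∪
      ({H : Γ × Γ → Bool | H a = false} ∩ {H : Γ × Γ → Bool | H b = true}) := by
    ext H
    simp only [mem_setOf_eq, mem_union, mem_inter_iff]
    cases hHa : H a <;> cases hHb : H b <;> simp
  rw [this]
  exact ((measSet_eval a true).inter (measSet_eval b false)).union
    ((measSet_eval a false).inter (measSet_eval b true))

lemma measSet_Qsep (s : Finset (Γ × Γ)) : MeasurableSet {H : Γ × Γ → Bool | Qsep s H} := by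
  have : {H : Γ × Γ → Bool | Qsep s H} = ⋂ γ : Γ,
      ({H : Γ × Γ → Bool | H (1, γ) = true}ᶜ ∪
        ⋃ q ∈ s, {H : Γ × Γ → Bool | H (γ * q.1, γ * q.2) ≠ H q}) := by
    ext H
    simp only [Qsep, mem_setOf_eq, mem_iInter, mem_union, mem_compl_iff, mem_iUnion]
    refine forall_congr' fun γ => ?_
    rw [imp_iff_not_or]
    tauto
  rw [this]
  refine MeasurableSet.iInter fun γ => MeasurableSet.union ((measSet_eval _ true).compl) ?_
  exact MeasurableSet.biUnion s.countable_toSet fun q _ => measSet_ne _ _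

lemma measurable_fIdx : Measurable (fIdx : (Γ × Γ → Bool) → ℕ) := by
  apply measurable_to_countable'
  intro k
  have : (fIdx : (Γ × Γ → Bool) → ℕ) ⁻¹' {k} =
      ({H : Γ × Γ → Bool | Qsep (sOf k) H} ∩
        ⋂ m : ℕ, ⋂ (_ : m < k), {H : Γ × Γ → Bool | Qsep (sOf m) H}ᶜ) ∪
      (({H : Γ × Γ → Bool | k = 0} : Set _) ∩ ⋂ n : ℕ, {H : Γ × Γ → Bool | Qsep (sOf n) H}ᶜ) := by
    ext H
    simp only [mem_preimage, mem_singleton_iff, mem_union, mem_inter_iff, mem_iInter,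
      mem_compl_iff, mem_setOf_eq]
    classical
    rw [fIdx]
    split
    · rename_i h
      rw [Nat.find_eq_iff h]
      constructor
      · rintro ⟨h1, h2⟩; exact Or.inl ⟨h1, h2⟩
      · rintro (⟨h1, h2⟩ | ⟨h1, h2⟩)
        · exact ⟨h1, h2⟩
        · obtain ⟨n, hn⟩ := h
          exact absurd hn (h2 n)
    · rename_i h
      push_neg at h
      constructor
      · rintro rfl
        exact Or.inr ⟨rfl, fun n => h n⟩
      · rintro (⟨h1, _⟩ | ⟨h1, _⟩)
        · exact absurd h1 (h k)
        · exact h1.symm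
  rw [this]
  refine MeasurableSet.union ?_ ?_
  · exact (measSet_Qsep _).inter (MeasurableSet.iInter fun m =>
      MeasurableSet.iInter fun _ => (measSet_Qsep _).compl)
  · refine MeasurableSet.inter ?_ (MeasurableSet.iInter fun n => (measSet_Qsep _).compl)
    by_cases hk : k = 0
    · simp [hk]
    · simp [hk]

lemma measSet_filt_eq (s t : Finset (Γ × Γ)) :
    MeasurableSet {H : Γ × Γ → Bool | filt s H = t} := by
  classical
  by_cases ht : t ⊆ s
  · have : {H : Γ × Γ → Bool | filt s H = t} =
        ⋂ q ∈ (s : Set (Γ × Γ)), {H : Γ × Γ → Bool | H q = (if q ∈ t then true else false)} := by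
      ext H
      simp only [mem_iInter, mem_setOf_eq, Finset.mem_coe]
      constructor
      · intro hf q hq
        have : q ∈ t ↔ (q ∈ s ∧ H q = true) := by
          rw [← hf]; simp [filt]
        by_cases hqt : q ∈ t
        · simp only [hqt, if_true]
          exact (this.1 hqt).2
        · simp only [hqt, if_false]
          cases hHq : H q
          · rfl
          · exact absurd (this.2 ⟨hq, hHq⟩) hqt
      · intro hcond
        ext q
        simp only [filt, Finset.mem_filter]
        constructor
        · rintro ⟨hqs, hqt⟩
          have := hcond q hqs
          rw [hqt] at this
          by_contra hq
          simp [hq] at this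
        · intro hqt
          refine ⟨ht hqt, ?_⟩
          have := hcond q (ht hqt)
          simpa [hqt] using this
    rw [this]
    exact MeasurableSet.biInter s.countable_toSet fun q _ => measSet_eval _ _
  · have : {H : Γ × Γ → Bool | filt s H = t} = ∅ := by
      ext H
      simp only [mem_setOf_eq, mem_empty_iff_false, iff_false]
      intro hf
      exact ht (by rw [← hf]; exact Finset.filter_subset _ _)
    rw [this]
    exact MeasurableSet.empty

lemma measurable_encFilt :
    Measurable (fun H : Γ × Γ → Bool => Encodable.encode (filt (sOf (fIdx H)) H)) := by
  apply measurable_to_countable'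
  intro m
  have : (fun H : Γ × Γ → Bool => Encodable.encode (filt (sOf (fIdx H)) H)) ⁻¹' {m} =
      ⋃ n : ℕ, (fIdx ⁻¹' {n}) ∩
        (⋃ t : Finset (Γ × Γ), {H : Γ × Γ → Bool | filt (sOf n) H = t ∧ Encodable.encode t = m}) := by
    ext H
    simp only [mem_preimage, mem_singleton_iff, mem_iUnion, mem_inter_iff, mem_setOf_eq]
    constructor
    · intro h
      exact ⟨fIdx H, rfl, filt (sOf (fIdx H)) H, rfl, h⟩
    · rintro ⟨n, hn, t, hft, hte⟩
      rw [hn, hft]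
      exact hte
  rw [this]
  refine MeasurableSet.iUnion fun n => (measurable_fIdx (measurableSet_singleton n)).inter
    (MeasurableSet.iUnion fun t => ?_)
  by_cases hte : Encodable.encode t = m
  · have : {H : Γ × Γ → Bool | filt (sOf n) H = t ∧ Encodable.encode t = m} =
        {H : Γ × Γ → Bool | filt (sOf n) H = t} := by
      ext H; simp [hte]
    rw [this]; exact measSet_filt_eq _ _
  · have : {H : Γ × Γ → Bool | filt (sOf n) H = t ∧ Encodable.encode t = m} = ∅ := by
      ext H; simp [hte]
    rw [this]; exact MeasurableSet.empty

lemma measurable_Fcol : Measurable (Fcol : (Γ × Γ → Bool) → ℕ) := by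
  apply measurable_to_countable'
  intro k
  have : (Fcol : (Γ × Γ → Bool) → ℕ) ⁻¹' {k} =
      (fIdx ⁻¹' {(Nat.unpair k).1}) ∩
      ((fun H : Γ × Γ → Bool => Encodable.encode (filt (sOf (fIdx H)) H)) ⁻¹' {(Nat.unpair k).2}) := by
    ext H
    simp only [mem_preimage, mem_singleton_iff, mem_inter_iff, Fcol]
    constructor
    · rintro rfl
      simp [Nat.unpair_pair]
    · rintro ⟨h1, h2⟩
      rw [h2, h1]
      exact Nat.pair_unpair k
  rw [this]
  exact (measurable_fIdx (measurableSet_singleton _)).inter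
    (measurable_encFilt (measurableSet_singleton _))

lemma measurable_nbr (γ : Γ) : Measurable (nbr γ : (Γ × Γ → Bool) → (Γ × Γ → Bool)) :=
  measurable_logicAct γ⁻¹

lemma measurable_gre (n : ℕ) : Measurable (gre (Γ := Γ) d n) := by
  induction n with
  | zero => exact measurable_const
  | succ n ih =>
    apply measurable_to_countable'
    intro c
    have hB : ∀ c' : Fin (d + 1), MeasurableSet {H : Γ × Γ → Bool |
        ∀ γ : Γ, H (1, γ) = true → Fcol (nbr γ H) < Fcol H → gre d n (nbr γ H) ≠ c'} := by
      intro c'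
      have : {H : Γ × Γ → Bool |
          ∀ γ : Γ, H (1, γ) = true → Fcol (nbr γ H) < Fcol H → gre d n (nbr γ H) ≠ c'} =
          ⋂ γ : Γ, ({H : Γ × Γ → Bool | H (1, γ) = true}ᶜ ∪
            {H : Γ × Γ → Bool | Fcol (nbr γ H) < Fcol H}ᶜ ∪
            {H : Γ × Γ → Bool | gre d n (nbr γ H) = c'}ᶜ) := by
        ext H
        simp only [mem_iInter, mem_setOf_eq, mem_union, mem_compl_iff]
        refine forall_congr' fun γ => ?_
        tauto
      rw [this]
      refine MeasurableSet.iInter fun γ => ?_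
      refine MeasurableSet.union (MeasurableSet.union (measSet_eval _ true).compl ?_) ?_
      · refine MeasurableSet.compl ?_
        have : {H : Γ × Γ → Bool | Fcol (nbr γ H) < Fcol H} =
            (fun H : Γ × Γ → Bool => (Fcol (nbr γ H), Fcol H)) ⁻¹' {p : ℕ × ℕ | p.1 < p.2} := rfl
        rw [this]
        exact ((measurable_Fcol.comp (measurable_nbr γ)).prodMk measurable_Fcol)
          ((Set.to_countable _).measurableSet)
      · exact ((ih.comp (measurable_nbr γ)) (measurableSet_singleton c')).compl
    have : gre d (n + 1) ⁻¹' {c} =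
        ({H : Γ × Γ → Bool | ∀ γ : Γ, H (1, γ) = true → Fcol (nbr γ H) < Fcol H →
            gre d n (nbr γ H) ≠ c} ∩
          ⋂ c' : Fin (d + 1), ⋂ (_ : c' < c), {H : Γ × Γ → Bool |
            ∀ γ : Γ, H (1, γ) = true → Fcol (nbr γ H) < Fcol H → gre d n (nbr γ H) ≠ c'}ᶜ) ∪
        ({H : Γ × Γ → Bool | c = 0} ∩
          ⋂ c' : Fin (d + 1), {H : Γ × Γ → Bool |
            ∀ γ : Γ, H (1, γ) = true → Fcol (nbr γ H) < Fcol H → gre d n (nbr γ H) ≠ c'}ᶜ) := by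
      ext H
      simp only [mem_preimage, mem_singleton_iff, mem_union, mem_inter_iff, mem_iInter,
        mem_compl_iff, mem_setOf_eq]
      rw [show gre d (n + 1) H = pick d (fun c => ∀ γ : Γ, H (1, γ) = true →
        Fcol (nbr γ H) < Fcol H → gre d n (nbr γ H) ≠ c) from rfl, pick_eq_iff]
    rw [this]
    refine MeasurableSet.union ((hB c).inter (MeasurableSet.iInter fun c' =>
      MeasurableSet.iInter fun _ => (hB c').compl)) (MeasurableSet.inter ?_
      (MeasurableSet.iInter fun c' => (hB c').compl))
    by_cases hc : c = 0 <;> simp [hc]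

lemma measurable_Ccol : Measurable (Ccol d : (Γ × Γ → Bool) → Fin (d + 1)) := by
  apply measurable_to_countable'
  intro c
  have : (Ccol d : (Γ × Γ → Bool) → Fin (d + 1)) ⁻¹' {c} =
      ⋃ k : ℕ, (Fcol ⁻¹' {k}) ∩ (gre d (k + 1) ⁻¹' {c}) := by
    ext H
    simp only [mem_preimage, mem_singleton_iff, mem_iUnion, mem_inter_iff, Ccol]
    constructor
    · intro h
      exact ⟨Fcol H, rfl, h⟩
    · rintro ⟨k, hk, h⟩
      rw [hk]
      exact h
  rw [this]
  exact MeasurableSet.iUnion fun k => (measurable_Fcol (measurableSet_singleton k)).inter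
    (measurable_gre _ (measurableSet_singleton c))

end Colour3
end Stmt11

namespace Stmt11
section Colour4
open Relation Set Encodable
variable {Γ : Type*} [Group Γ] [Countable Γ] [Encodable Γ] (d : ℕ)

noncomputable def colr (G : Γ × Γ → Bool) : Γ → Fin (d + 1) :=
  fun x => Ccol d (logicAct x⁻¹ G)

lemma measurable_colr : Measurable (colr (Γ := Γ) d) :=
  measurable_pi_lambda _ fun x => measurable_Ccol.comp (measurable_logicAct x⁻¹)

lemma colr_equivariant (γ : Γ) (G : Γ × Γ → Bool) :
    colr d (logicAct γ G) = fun δ => colr d G (γ⁻¹ * δ) := by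
  funext δ
  show Ccol d (logicAct δ⁻¹ (logicAct γ G)) = Ccol d (logicAct (γ⁻¹ * δ)⁻¹ G)
  rw [logicAct_logicAct]
  congr 2
  rw [mul_inv_rev, inv_inv]

lemma colr_proper {G : Γ × Γ → Bool} (hG1 : IsConnGraphDeg d G) (hG2 : ¬ IsBadGraph G)
    {x y : Γ} (hxy : G (x, y) = true) : colr d G x ≠ colr d G y := by
  have hH : GoodG d (logicAct x⁻¹ G) :=
    ⟨isConnGraphDeg_logicAct hG1 x⁻¹, fun hb => hG2 (isBadGraph_logicAct hb)⟩
  have hedge : (logicAct x⁻¹ G) (1, x⁻¹ * y) = true := by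
    rw [logicAct_apply]
    simpa using hxy
  have := Ccol_ne hH hedge
  show Ccol d (logicAct x⁻¹ G) ≠ Ccol d (logicAct y⁻¹ G)
  convert this using 2
  rw [nbr, logicAct_logicAct]
  congr 1
  group

end Colour4
end Stmt11


/-- the good graphs form a Γ-invariant dense `G_δ` subset of `K(Γ)`
containing the free part; they admit a Borel equivariant proper `(d+1)`-colouring map;
and no orbit of a bad graph admits an equivariant proper colouring map. -/
theorem stmt_11 {Γ : Type*} [Group Γ] [Countable Γ] [Infinite Γ]
    (d : ℕ) (hd : 2 ≤ d) :
    -- (i)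
    ((∀ γ : Γ, ∀ G : Γ × Γ → Bool,
        IsConnGraphDeg d G ∧ ¬ IsBadGraph G →
        IsConnGraphDeg d (logicAct γ G) ∧ ¬ IsBadGraph (logicAct γ G)) ∧
      IsGδ {G : {H : Γ × Γ → Bool // IsConnGraphDeg d H} |
        ¬ IsBadGraph (G : Γ × Γ → Bool)} ∧
      Dense {G : {H : Γ × Γ → Bool // IsConnGraphDeg d H} |
        ¬ IsBadGraph (G : Γ × Γ → Bool)} ∧
      (∀ G : Γ × Γ → Bool, IsConnGraphDeg d G →
        (∀ γ : Γ, γ ≠ 1 → logicAct γ G ≠ G) → ¬ IsBadGraph G)) ∧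
    -- (ii)
    (∃ c : (Γ × Γ → Bool) → (Γ → Fin (d + 1)),
      Measurable c ∧
      (∀ γ : Γ, ∀ G : Γ × Γ → Bool, IsConnGraphDeg d G → ¬ IsBadGraph G →
        c (logicAct γ G) = fun δ => c G (γ⁻¹ * δ)) ∧
      (∀ G : Γ × Γ → Bool, IsConnGraphDeg d G → ¬ IsBadGraph G →
        ∀ x y : Γ, G (x, y) = true → c G x ≠ c G y)) ∧
    -- (iii)
    (∀ G : Γ × Γ → Bool, IsConnGraphDeg d G → IsBadGraph G →
      ¬ ∃ c : (Γ × Γ → Bool) → (Γ → Fin (d + 1)),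
        (∀ γ δ : Γ, c (logicAct γ (logicAct δ G)) = fun x => c (logicAct δ G) (γ⁻¹ * x)) ∧
        (∀ δ : Γ, ∀ x y : Γ, (logicAct δ G) (x, y) = true →
          c (logicAct δ G) x ≠ c (logicAct δ G) y)) := by
  
  refine ⟨⟨?_, Stmt11.good_isGδ d, ?_, fun G hG hfree => Stmt11.free_good hG hfree⟩, ?_, ?_⟩
  · -- invariance
    rintro γ G ⟨h1, h2⟩
    exact ⟨Stmt11.isConnGraphDeg_logicAct h1 γ, fun hb => h2 (Stmt11.isBadGraph_logicAct hb)⟩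
  · -- density
    rw [dense_iff_inter_open]
    rintro U hU ⟨⟨G₀, hG₀⟩, hmem⟩
    obtain ⟨V, hV, hUV⟩ := isOpen_induced_iff.1 hU
    have hG₀V : G₀ ∈ V := by
      rw [← hUV] at hmem
      exact hmem
    obtain ⟨J, u, hu, hsub⟩ := isOpen_pi_iff.1 hV G₀ hG₀V
    obtain ⟨G', hG'1, hG'2, hG'agree⟩ := Stmt11.density_core d hd G₀ hG₀ J
    refine ⟨⟨G', hG'1⟩, ?_, hG'2⟩
    rw [← hUV]
    apply hsub
    intro a ha
    show G' a ∈ u a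
    rw [hG'agree a ha]
    exact (hu a ha).2
  · -- Borel equivariant colouring
    letI : Encodable Γ := Encodable.ofCountable Γ
    exact ⟨Stmt11.colr d, Stmt11.measurable_colr d,
      fun γ G _ _ => Stmt11.colr_equivariant d γ G,
      fun G h1 h2 x y hxy => Stmt11.colr_proper d h1 h2 hxy⟩
  · exact fun G hG hbad => Stmt11.part_iii G hG hbad
end
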